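/- arXiv:2405.16045 — 5 statements merged into one kernel-verified Lean document; each statement's English description precedes it below -/
import Mathlib

section
/- Let n, m ≥ 1, let L_1, …, L_{n+m} be positive real numbers, let α, β ∈ (0,1), and let F̄ : ℝ^{n+m} → ℝ be a continuous function that is L_j-periodic in its j-th argument for every 1 ≤ j ≤ n+m. Assume that (1/L_1, …, 1/L_n) are linearly independent over ℚ, that (1/L_{n+1}, …, 1/L_{n+m}) are linearly independent over ℚ, and, in case α = β, that the full family (1/L_1, …, 1/L_{n+m}) is linearly independent over ℚ. For ε ∈ (0,1) define F_ε : ℝ → ℝ by F_ε(x) = F̄(x/ε^α, …, x/ε^α, x/ε^β, …, x/ε^β), where the first n arguments equal x/ε^α and the last m arguments equal x/ε^β. Then for every closed bounded interval I = [a,b] with a < b, the family F_ε converges weakly in L²(I) to the constant function μ(F̄) as ε → 0⁺. -/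
/-!
Lift `F` to a continuous function `Φ` on the unit torus `(ℝ/ℤ)^(n+m)` through
`x ↦ (x_j / L_j)_j`; then `F_ε(x) = Φ(x ω_ε)` for the frequency vector
`ω_ε = (ε^{-α}/L_1, …, ε^{-β}/L_{n+m})`, a linear flow on the torus. For a character
`e_k` the integral `∫ e_k(x ω_ε) g(x) dx` is a Fourier transform of `g 1_I` at the frequency
`⟨k, ω_ε⟩`, which tends to infinity when `k ≠ 0` by the linear independence assumptions, so
it tends to `0` by the Riemann–Lebesgue lemma. The functionals `Φ ↦ ∫ Φ(x ω_ε) g(x) dx` are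
bounded by `‖g‖₁` uniformly in `ε`, so convergence extends from the span of the characters
to all of `C(𝕋, ℂ)` by Stone–Weierstrass density.
-/

open MeasureTheory Filter Set Topology

lemma Function.Periodic.sum_intCast_mul {ι Y : Type*} [Fintype ι] [DecidableEq ι]
    {F : (ι → ℝ) → Y} {L : ι → ℝ}
    (hF : ∀ x j, F (Function.update x j (x j + L j)) = F x) (c : ι → ℤ) :
    Function.Periodic F (fun j => c j * L j) := by
  have hsingle : ∀ j, Function.Periodic F (Pi.single j (L j)) := fun j x => by
    convert hF x j using 2
    ext i; rcases eq_or_ne i j with rfl | h <;> simp [*]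
  have hsum : (fun j => c j * L j) = ∑ j, c j • Pi.single j (L j) := by
    ext i; simp [Finset.sum_apply, Pi.single_apply, zsmul_eq_mul]
  rw [hsum]
  exact Finset.sum_induction _ _ (fun _ _ => Function.Periodic.add_period)
    (fun _ => congrArg F (add_zero _)) fun j _ => (hsingle j).zsmul (c j)

section IntegralCompMul
variable {X T : Type*} [TopologicalSpace X] [MeasurableSpace X] [OpensMeasurableSpace X]
  [TopologicalSpace T] [CompactSpace T] {μ : Measure X}

lemma MeasureTheory.Integrable.continuousMap_comp_mul (φ : C(X, T)) {g : X → ℂ}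
    (hg : Integrable g μ) (G : C(T, ℂ)) : Integrable (fun x => G (φ x) * g x) μ :=
  hg.bdd_mul (G.comp φ).continuous.aestronglyMeasurable
    (Eventually.of_forall fun x => G.norm_coe_le_norm (φ x))

noncomputable def integralCompMulCLM (φ : C(X, T)) {g : X → ℂ} (hg : Integrable g μ) :
    C(T, ℂ) →L[ℂ] ℂ :=
  LinearMap.mkContinuous
    { toFun G := ∫ x, G (φ x) * g x ∂μ
      map_add' G H := by
        simp only [ContinuousMap.add_apply, add_mul]
        exact integral_add (hg.continuousMap_comp_mul φ G) (hg.continuousMap_comp_mul φ H)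
      map_smul' c G := by
        simp only [ContinuousMap.smul_apply, smul_eq_mul, mul_assoc, integral_const_mul,
          RingHom.id_apply] }
    (∫ x, ‖g x‖ ∂μ) fun G => by
      refine (norm_integral_le_of_norm_le (hg.norm.const_mul ‖G‖)
        (Eventually.of_forall fun x => ?_)).trans_eq (by rw [integral_const_mul, mul_comm])
      rw [norm_mul]
      exact mul_le_mul_of_nonneg_right (G.norm_coe_le_norm (φ x)) (norm_nonneg _)

lemma integralCompMulCLM_apply (φ : C(X, T)) {g : X → ℂ} (hg : Integrable g μ) (G : C(T, ℂ)) :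
    integralCompMulCLM φ hg G = ∫ x, G (φ x) * g x ∂μ := rfl

lemma norm_integralCompMulCLM_le (φ : C(X, T)) {g : X → ℂ} (hg : Integrable g μ) :
    ‖integralCompMulCLM φ hg‖ ≤ ∫ x, ‖g x‖ ∂μ :=
  LinearMap.mkContinuous_norm_le _ (integral_nonneg fun _ => norm_nonneg _) _

end IntegralCompMul

lemma integral_Ioo_fourier_div {T : ℝ} (hT : 0 < T) (n : ℤ) :
    ∫ t in Ioo 0 T, fourier n ((t / T : ℝ) : UnitAddCircle) = if n = 0 then (T : ℂ) else 0 := by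
  have : Fact (0 < T) := ⟨hT⟩
  have hcoeff := fourierCoeff_eq_intervalIntegral (T := T) (fourier 0) (-n) 0
  have hrescale : ∀ t : ℝ, fourier (-(-n)) (t : AddCircle T) • fourier 0 (t : AddCircle T)
      = fourier n ((t / T : ℝ) : UnitAddCircle) := fun t => by
    rw [neg_neg, smul_eq_mul, fourier_zero, mul_one, fourier_coe_apply, fourier_coe_apply]
    push_cast; ring_nf
  simp only [hrescale, zero_add, fourierCoeff_fourier, Pi.single_apply, neg_eq_zero,
    intervalIntegral.integral_of_le hT.le, integral_Ioc_eq_integral_Ioo, one_div,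
    Complex.real_smul, Complex.ofReal_inv] at hcoeff
  have hT' : (T : ℂ) ≠ 0 := by exact_mod_cast hT.ne'
  split_ifs at hcoeff ⊢ <;>
  · field_simp at hcoeff
    linear_combination -hcoeff

namespace UnitAddTorus

variable {ι : Type*}

noncomputable def scaledMk (L : ι → ℝ) : C(ι → ℝ, UnitAddTorus ι) where
  toFun x j := ((x j / L j : ℝ) : UnitAddCircle)

lemma isQuotientMap_scaledMk {L : ι → ℝ} (hL : ∀ j, L j ≠ 0) : IsQuotientMap (scaledMk L) := by
  have hmk : IsQuotientMap (Pi.map fun (_ : ι) (t : ℝ) => (t : UnitAddCircle)) :=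
    (IsOpenQuotientMap.piMap fun _ => QuotientAddGroup.isOpenQuotientMap_mk).isQuotientMap
  exact hmk.comp (Homeomorph.piCongrRight fun j =>
    Homeomorph.mulRight₀ (L j)⁻¹ (inv_ne_zero (hL j))).isQuotientMap

section Lift

variable {Y : Type*} [DecidableEq ι] [Fintype ι] [TopologicalSpace Y]

lemma exists_continuousMap_comp_scaledMk_eq {L : ι → ℝ} (hL : ∀ j, L j ≠ 0)
    {F : (ι → ℝ) → Y} (hFc : Continuous F)
    (hF : ∀ x j, F (Function.update x j (x j + L j)) = F x) :
    ∃ Φ : C(UnitAddTorus ι, Y), ∀ x, Φ (scaledMk L x) = F x := by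
  have hfac : Function.FactorsThrough F (scaledMk L) := by
    intro x y hxy
    have hcoord : ∀ j, ∃ c : ℤ, c • (1 : ℝ) = x j / L j - y j / L j := fun j =>
      (AddCircle.coe_eq_zero_iff 1).mp
        (by rw [AddCircle.coe_sub]; exact sub_eq_zero.mpr (congrFun hxy j))
    choose c hc using hcoord
    have hxy' : x = y + fun j => c j * L j := by
      ext j
      have := hc j
      rw [zsmul_eq_mul, mul_one] at this
      field_simp [hL j] at this
      simp only [Pi.add_apply]; linarith
    simp only [hxy', Function.Periodic.sum_intCast_mul hF c y]
  exact ⟨(isQuotientMap_scaledMk hL).lift ⟨F, hFc⟩ hfac,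
    fun x => DFunLike.congr_fun ((isQuotientMap_scaledMk hL).lift_comp ⟨F, hFc⟩ hfac) x⟩

end Lift

variable [Fintype ι]

noncomputable def cellMean (L : ι → ℝ) : C(UnitAddTorus ι, ℂ) →L[ℂ] ℂ :=
  ((∏ j, L j : ℝ)⁻¹ : ℂ) • integralCompMulCLM (scaledMk L)
    (integrableOn_const (s := univ.pi fun j => Ioo 0 (L j)) (C := (1 : ℂ)) (by
      rw [Real.volume_pi_Ioo]; exact ENNReal.prod_ne_top fun _ _ => ENNReal.ofReal_ne_top))

lemma cellMean_apply (L : ι → ℝ) (G : C(UnitAddTorus ι, ℂ)) :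
    cellMean L G
      = ((∏ j, L j : ℝ)⁻¹ : ℂ) * ∫ x in univ.pi fun j => Ioo 0 (L j), G (scaledMk L x) := by
  change _ * ∫ x in _, G (scaledMk L x) * 1 = _
  simp_rw [mul_one]

lemma cellMean_of_forall_comp_scaledMk_eq {L : ι → ℝ} {Φ : C(UnitAddTorus ι, ℂ)}
    {F : (ι → ℝ) → ℝ} (hΦ : ∀ x, Φ (scaledMk L x) = F x) :
    cellMean L Φ = ((∏ j, L j)⁻¹ * ∫ x in univ.pi fun j => Ioo 0 (L j), F x : ℝ) := by
  simp only [cellMean_apply, hΦ, integral_complex_ofReal, Complex.ofReal_mul,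
    Complex.ofReal_inv]

lemma cellMean_mFourier {L : ι → ℝ} (hL : ∀ j, 0 < L j) (k : ι → ℤ) :
    cellMean L (mFourier k) = if k = 0 then 1 else 0 := by
  have hprod : ∫ x in univ.pi fun j => Ioo 0 (L j), mFourier k (scaledMk L x)
      = ∏ j, ∫ t in Ioo 0 (L j), fourier (k j) ((t / L j : ℝ) : UnitAddCircle) := by
    rw [volume_pi, Measure.restrict_pi_pi]
    exact integral_fintype_prod_eq_prod (fun j t => fourier (k j) ((t / L j : ℝ) : UnitAddCircle))
  simp only [cellMean_apply, hprod, integral_Ioo_fourier_div (hL _)]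
  split_ifs with hk
  · have hpos : (∏ j, L j) ≠ 0 := Finset.prod_ne_zero_iff.mpr fun j _ => (hL j).ne'
    simp only [hk, Pi.zero_apply, if_true, ← Complex.ofReal_prod]
    exact inv_mul_cancel₀ (Complex.ofReal_ne_zero.mpr hpos)
  · obtain ⟨j, hj⟩ : ∃ j, k j ≠ 0 := by simpa [funext_iff] using hk
    exact mul_eq_zero_of_right _ (Finset.prod_eq_zero (Finset.mem_univ j) (if_neg hj))

noncomputable def linearFlow (ω : ι → ℝ) : C(ℝ, UnitAddTorus ι) where
  toFun x j := ((x * ω j : ℝ) : UnitAddCircle)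

lemma mFourier_linearFlow (k : ι → ℤ) (ω : ι → ℝ) (x : ℝ) :
    mFourier k (linearFlow ω x) = Real.fourierChar (x * ∑ j, k j * ω j) := by
  simp only [mFourier, linearFlow, ContinuousMap.coe_mk, fourier_coe_apply,
    Real.fourierChar_apply, ← Complex.exp_sum]
  congr 1
  push_cast
  rw [Finset.mul_sum, Finset.mul_sum, Finset.sum_mul]
  exact Finset.sum_congr rfl fun j _ => by ring

lemma tendsto_setIntegral_mFourier_linearFlow_mul {α : Type*} {l : Filter α} {ω : α → ι → ℝ}
    {k : ι → ℤ} (hω : Tendsto (fun a => ∑ j, k j * ω a j) l (cocompact ℝ)) {s : Set ℝ}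
    (hs : MeasurableSet s) (g : ℝ → ℂ) :
    Tendsto (fun a => ∫ x in s, mFourier k (linearFlow (ω a) x) * g x) l (𝓝 0) := by
  refine ((Real.tendsto_integral_exp_smul_cocompact (s.indicator g)).comp
    ((Homeomorph.neg ℝ).isClosedEmbedding.tendsto_cocompact.comp hω)).congr fun a => ?_
  rw [← integral_indicator hs]
  refine integral_congr_ae (Eventually.of_forall fun x => ?_)
  simp only [Function.comp_apply, Homeomorph.coe_neg, mul_neg, neg_neg, Circle.smul_def,
    smul_eq_mul, mFourier_linearFlow, indicator_mul_right]

theorem tendsto_setIntegral_comp_linearFlow_mul {α : Type*} {l : Filter α} {ω : α → ι → ℝ}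
    (hω : ∀ k : ι → ℤ, k ≠ 0 → Tendsto (fun a => ∑ j, k j * ω a j) l (cocompact ℝ))
    (M : C(UnitAddTorus ι, ℂ) →L[ℂ] ℂ) (hM : ∀ k, M (mFourier k) = if k = 0 then 1 else 0)
    {s : Set ℝ} (hs : MeasurableSet s) {g : ℝ → ℂ} (hg : IntegrableOn g s)
    (G : C(UnitAddTorus ι, ℂ)) :
    Tendsto (fun a => ∫ x in s, G (linearFlow (ω a) x) * g x) l (𝓝 (M G * ∫ x in s, g x)) := by
  set Λ : α → C(UnitAddTorus ι, ℂ) →L[ℂ] ℂ := fun a => integralCompMulCLM (linearFlow (ω a)) hg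
  set S := {G : C(UnitAddTorus ι, ℂ) | Tendsto (fun a => Λ a G) l (𝓝 (M G * ∫ x in s, g x))}
  have hequi : Equicontinuous fun a => ⇑(Λ a) :=
    (LipschitzWith.uniformEquicontinuous _ ⟨_, integral_nonneg fun _ => norm_nonneg _⟩ fun a =>
      (Λ a).lipschitz.weaken (norm_integralCompMulCLM_le _ hg)).equicontinuous
  have hclosed : IsClosed S :=
    hequi.isClosed_setOfPred_tendsto (M.continuous.mul continuous_const)
  have hspan : (Submodule.span ℂ (range (mFourier (d := ι))) : Set C(UnitAddTorus ι, ℂ)) ⊆ S := by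
    intro G hG
    induction hG using Submodule.span_induction with
    | mem G hG =>
      obtain ⟨k, rfl⟩ := hG
      change Tendsto (fun a => ∫ x in s, mFourier k (linearFlow (ω a) x) * g x) l
        (𝓝 (M (mFourier k) * ∫ x in s, g x))
      rcases eq_or_ne k 0 with rfl | hk
      · rw [hM, if_pos rfl, one_mul]
        simpa [mFourier_zero] using tendsto_const_nhds
      · simpa [hM, hk] using tendsto_setIntegral_mFourier_linearFlow_mul (hω k hk) hs g
    | zero => simpa [S] using tendsto_const_nhds
    | add G H _ _ hG hH => simpa [S, add_mul] using hG.add hH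
    | smul c G _ hG => simpa [S, mul_assoc] using hG.const_mul c
  have hdense : G ∈ (Submodule.span ℂ (range (mFourier (d := ι)))).topologicalClosure := by
    rw [span_mFourier_closure_eq_top]; trivial
  exact closure_minimal hspan hclosed hdense

end UnitAddTorus

lemma tendsto_mul_rpow_add_mul_rpow_atTop_cocompact {α β c d : ℝ} (hα : 0 < α) (hβ : 0 < β)
    (hcd : c ≠ 0 ∨ d ≠ 0) (hαβ : α = β → c + d ≠ 0) :
    Tendsto (fun t : ℝ => c * t ^ α + d * t ^ β) atTop (cocompact ℝ) := by
  wlog hβα : β ≤ α generalizing α β c d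
  · simpa only [add_comm] using
      this hβ hα hcd.symm (fun h => add_comm c d ▸ hαβ h.symm) (le_of_not_ge hβα)
  obtain ⟨δ, hδ, hlow⟩ : ∃ δ > 0, ∀ᶠ t in atTop, δ ≤ |c * t ^ (α - β) + d| := by
    rcases hβα.eq_or_lt with rfl | hlt
    · exact ⟨|c + d|, abs_pos.mpr (hαβ rfl), by simp⟩
    rcases eq_or_ne c 0 with rfl | hc
    · exact ⟨|d|, abs_pos.mpr (hcd.resolve_left (by simp)), by simp⟩
    have hgrow : Tendsto (fun t : ℝ => |c| * t ^ (α - β) - |d|) atTop atTop :=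
      tendsto_atTop_add_const_right _ _
        ((tendsto_rpow_atTop (sub_pos.mpr hlt)).const_mul_atTop (abs_pos.mpr hc))
    refine ⟨1, one_pos, (hgrow.eventually_ge_atTop 1).mono fun t ht => ht.trans ?_⟩
    calc |c| * t ^ (α - β) - |d| ≤ |c * t ^ (α - β)| - |d| := by
          rw [abs_mul]; gcongr; exact le_abs_self _
      _ ≤ |c * t ^ (α - β) + d| := abs_sub_abs_le_abs_add _ _
  rw [← Metric.cobounded_eq_cocompact, ← tendsto_norm_atTop_iff_cobounded]
  refine tendsto_atTop_mono' _ ?_ ((tendsto_rpow_atTop hβ).const_mul_atTop hδ)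
  filter_upwards [hlow, eventually_gt_atTop 0] with t ht htpos
  have hsplit : c * t ^ α + d * t ^ β = t ^ β * (c * t ^ (α - β) + d) := by
    rw [Real.rpow_sub htpos]; field_simp
  rw [hsplit, Real.norm_eq_abs, abs_mul, abs_of_pos (Real.rpow_pos_of_pos htpos β), mul_comm]
  gcongr

lemma tendsto_mul_inv_rpow_add_mul_inv_rpow_cocompact {α β c d : ℝ} (hα : 0 < α) (hβ : 0 < β)
    (hcd : c ≠ 0 ∨ d ≠ 0) (hαβ : α = β → c + d ≠ 0) :
    Tendsto (fun ε : ℝ => c * (ε ^ α)⁻¹ + d * (ε ^ β)⁻¹) (𝓝[>] 0) (cocompact ℝ) := by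
  refine ((tendsto_mul_rpow_add_mul_rpow_atTop_cocompact hα hβ hcd hαβ).comp
    tendsto_inv_nhdsGT_zero).congr' ?_
  filter_upwards [self_mem_nhdsWithin] with ε (hε : 0 < ε)
  simp [Real.inv_rpow hε.le]

lemma LinearIndependent.eq_zero_of_sum_intCast_mul_eq_zero {ι : Type*} [Fintype ι] {v : ι → ℝ}
    (hv : LinearIndependent ℚ v) {k : ι → ℤ} (hk : ∑ i, (k i : ℝ) * v i = 0) : k = 0 :=
  funext <| Fintype.linearIndependent_iff.mp (hv.restrict_scalars' ℤ) k (by simpa [zsmul_eq_mul])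

noncomputable def twoScaleFreq (n : ℕ) {d : ℕ} (L : Fin d → ℝ) (α β ε : ℝ) : Fin d → ℝ :=
  fun j => (if (j : ℕ) < n then (ε ^ α)⁻¹ else (ε ^ β)⁻¹) / L j

lemma linearFlow_twoScaleFreq (n : ℕ) {d : ℕ} (L : Fin d → ℝ) (α β ε x : ℝ) :
    UnitAddTorus.linearFlow (twoScaleFreq n L α β ε) x
      = UnitAddTorus.scaledMk L (fun j => if (j : ℕ) < n then x / ε ^ α else x / ε ^ β) := by
  ext j
  simp only [UnitAddTorus.linearFlow, UnitAddTorus.scaledMk, twoScaleFreq, ContinuousMap.coe_mk]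
  split_ifs <;> congr 1 <;> ring

lemma tendsto_sum_mul_twoScaleFreq_cocompact {n m : ℕ} {L : Fin (n + m) → ℝ} {α β : ℝ}
    (hα : 0 < α) (hβ : 0 < β)
    (hindep1 : LinearIndependent ℚ (fun j : Fin n => (L (j.castAdd m))⁻¹))
    (hindep2 : LinearIndependent ℚ (fun j : Fin m => (L (j.natAdd n))⁻¹))
    (hindep3 : α = β → LinearIndependent ℚ (fun j : Fin (n + m) => (L j)⁻¹))
    {k : Fin (n + m) → ℤ} (hk : k ≠ 0) :
    Tendsto (fun ε => ∑ j, (k j : ℝ) * twoScaleFreq n L α β ε j) (𝓝[>] 0) (cocompact ℝ) := by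
  set c := ∑ i : Fin n, (k (i.castAdd m) : ℝ) * (L (i.castAdd m))⁻¹
  set d := ∑ i : Fin m, (k (i.natAdd n) : ℝ) * (L (i.natAdd n))⁻¹
  have hsum : ∀ ε, ∑ j, (k j : ℝ) * twoScaleFreq n L α β ε j = c * (ε ^ α)⁻¹ + d * (ε ^ β)⁻¹ := by
    intro ε
    simp only [twoScaleFreq, Fin.sum_univ_add, Fin.val_castAdd, Fin.val_natAdd, Fin.is_lt,
      if_true, Nat.not_lt.mpr (Nat.le_add_right _ _), if_false, c, d, Finset.sum_mul]
    congr 1 <;> exact Finset.sum_congr rfl fun i _ => by ring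
  have hcd : c ≠ 0 ∨ d ≠ 0 := by
    by_contra! h
    apply hk
    ext j
    refine Fin.addCases (fun i => ?_) (fun i => ?_) j
    · exact congrFun (hindep1.eq_zero_of_sum_intCast_mul_eq_zero h.1) i
    · exact congrFun (hindep2.eq_zero_of_sum_intCast_mul_eq_zero h.2) i
  have hαβ : α = β → c + d ≠ 0 := fun hab hzero => hk <|
    (hindep3 hab).eq_zero_of_sum_intCast_mul_eq_zero (by rwa [Fin.sum_univ_add])
  exact (tendsto_mul_inv_rpow_add_mul_inv_rpow_cocompact hα hβ hcd hαβ).congr fun ε =>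
    (hsum ε).symm

open UnitAddTorus in
theorem quasiPeriodic_weak_convergence_to_mean_general
    (n m : ℕ)
    (L : Fin (n + m) → ℝ) (hL : ∀ j, 0 < L j)
    (α β : ℝ) (hα : α ∈ Set.Ioo (0 : ℝ) 1) (hβ : β ∈ Set.Ioo (0 : ℝ) 1)
    (F : (Fin (n + m) → ℝ) → ℝ) (hFcont : Continuous F)
    (hFper : ∀ (x : Fin (n + m) → ℝ) (j : Fin (n + m)),
      F (Function.update x j (x j + L j)) = F x)
    (hindep1 : LinearIndependent ℚ (fun j : Fin n => (L (j.castAdd m))⁻¹))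
    (hindep2 : LinearIndependent ℚ (fun j : Fin m => (L (j.natAdd n))⁻¹))
    (hindep3 : α = β → LinearIndependent ℚ (fun j : Fin (n + m) => (L j)⁻¹))
    (μF : ℝ)
    (hμF : μF = (∏ j, L j)⁻¹ * ∫ x in Set.univ.pi (fun j => Set.Ioo 0 (L j)), F x) :
    ∀ a b : ℝ, a < b → ∀ g : ℝ → ℝ,
      MemLp g 2 (volume.restrict (Set.Icc a b)) →
      Tendsto
        (fun ε : ℝ =>
          ∫ x in Set.Icc a b,
            F (fun j => if (j : ℕ) < n then x / ε ^ α else x / ε ^ β) * g x)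
        (nhdsWithin 0 (Set.Ioi 0))
        (nhds (∫ x in Set.Icc a b, μF * g x)) := by
  intro a b _ g hg
  obtain ⟨Φ, hΦ⟩ := exists_continuousMap_comp_scaledMk_eq (F := fun x => (F x : ℂ))
    (fun j => (hL j).ne') (by fun_prop) fun x j => congrArg Complex.ofReal (hFper x j)
  have hlim := tendsto_setIntegral_comp_linearFlow_mul
    (fun k hk => tendsto_sum_mul_twoScaleFreq_cocompact hα.1 hβ.1 hindep1 hindep2 hindep3 hk)
    (cellMean L) (cellMean_mFourier hL) measurableSet_Icc (g := fun x => (g x : ℂ))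
    (hg.integrable one_le_two).ofReal Φ
  rw [← tendsto_ofReal_iff]
  convert hlim using 2 with ε
  · rw [← integral_complex_ofReal]
    simp only [linearFlow_twoScaleFreq, hΦ, Complex.ofReal_mul]
  · rw [cellMean_of_forall_comp_scaledMk_eq hΦ, ← hμF, ← integral_complex_ofReal,
      ← integral_const_mul]
    simp only [Complex.ofReal_mul]

/-- Weak L² convergence of quasi-periodic functions with two oscillation scales to the
cell average of the underlying periodic function. -/
theorem quasiPeriodic_weak_convergence_to_mean
    (n m : ℕ) (hn : 1 ≤ n) (hm : 1 ≤ m)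
    (L : Fin (n + m) → ℝ) (hL : ∀ j, 0 < L j)
    (α β : ℝ) (hα : α ∈ Set.Ioo (0 : ℝ) 1) (hβ : β ∈ Set.Ioo (0 : ℝ) 1)
    (F : (Fin (n + m) → ℝ) → ℝ) (hFcont : Continuous F)
    (hFper : ∀ (x : Fin (n + m) → ℝ) (j : Fin (n + m)),
      F (Function.update x j (x j + L j)) = F x)
    (hindep1 : LinearIndependent ℚ (fun j : Fin n => (L (j.castAdd m))⁻¹))
    (hindep2 : LinearIndependent ℚ (fun j : Fin m => (L (j.natAdd n))⁻¹))
    (hindep3 : α = β → LinearIndependent ℚ (fun j : Fin (n + m) => (L j)⁻¹))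
    (μF : ℝ)
    (hμF : μF = (∏ j, L j)⁻¹ * ∫ x in Set.univ.pi (fun j => Set.Ioo 0 (L j)), F x) :
    ∀ a b : ℝ, a < b → ∀ g : ℝ → ℝ,
      MemLp g 2 (volume.restrict (Set.Icc a b)) →
      Tendsto
        (fun ε : ℝ =>
          ∫ x in Set.Icc a b,
            F (fun j => if (j : ℕ) < n then x / ε ^ α else x / ε ^ β) * g x)
        (nhdsWithin 0 (Set.Ioi 0))
        (nhds (∫ x in Set.Icc a b, μF * g x)) :=
  quasiPeriodic_weak_convergence_to_mean_general n m L hL α β hα hβ F hFcont hFper hindep1 hindep2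
    hindep3 μF hμF
end

section
/- Let n, m ≥ 1, let L_1, …, L_{n+m} be positive real numbers, let α, β ∈ (0,1), let S be a finite subset of ℤ^{n+m} \ {0}, and let a_0 ∈ ℂ and a_k ∈ ℂ for each k ∈ S. For k ∈ S set λ_k = Σ_{j=1}^{n} k_j/L_j and μ_k = Σ_{j=n+1}^{n+m} k_j/L_j. Assume that for every k ∈ S one has (λ_k, μ_k) ≠ (0,0), and in addition λ_k + μ_k ≠ 0 whenever α = β. For ε ∈ (0,1) define F_ε : ℝ → ℂ by F_ε(x) = a_0 + Σ_{k∈S} a_k exp(2πi(λ_k x ε^{−α} + μ_k x ε^{−β})). Then for all real numbers a < b, ∫_a^b F_ε(x) dx → (b − a) a_0 as ε → 0⁺. -/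
open Filter Topology

/-!
Each non-constant mode integrates to `(e^{2πi c b} - e^{2πi c a}) / (2πi c)`, which is at most
`1 / (π |c|)` in norm, where `c = λ_k ε^{-α} + μ_k ε^{-β}` is its effective frequency. So it
suffices that `|c| → ∞` as `ε → 0⁺`. If `α < β` and `μ_k ≠ 0`, then
`|c| = |λ_k ε^{β-α} + μ_k| ε^{-β}` with the first factor tending to `|μ_k| > 0`; if `μ_k = 0`
then `λ_k ≠ 0` and `|c| = |λ_k| ε^{-α}`; if `α = β` then `|c| = |λ_k + μ_k| ε^{-α}`, which is why
`λ_k + μ_k ≠ 0` is needed in that case.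
-/

lemma tendsto_abs_mul_rpow_neg_nhdsGT_zero {c γ : ℝ} (hc : c ≠ 0) (hγ : 0 < γ) :
    Tendsto (fun ε : ℝ => |c * ε ^ (-γ)|) (𝓝[>] 0) atTop := by
  refine ((tendsto_rpow_neg_nhdsGT_zero (neg_lt_zero.2 hγ)).const_mul_atTop
    (abs_pos.2 hc)).congr' ?_
  filter_upwards [self_mem_nhdsWithin] with ε (hε : 0 < ε)
  rw [abs_mul, abs_of_pos (Real.rpow_pos_of_pos hε _)]

lemma tendsto_abs_add_mul_rpow_neg_of_lt_of_ne_zero {l m α β : ℝ} (hαβ : α < β) (hm : m ≠ 0)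
    (hβ : 0 < β) :
    Tendsto (fun ε : ℝ => |l * ε ^ (-α) + m * ε ^ (-β)|) (𝓝[>] 0) atTop := by
  have hfactor : Tendsto (fun ε : ℝ => |l * ε ^ (β - α) + m|) (𝓝[>] 0) (𝓝 |m|) := by
    have hpow : Tendsto (fun ε : ℝ => ε ^ (β - α)) (𝓝[>] 0) (𝓝 0) := by
      simpa [Real.zero_rpow (sub_pos.2 hαβ).ne'] using
        (Real.continuousAt_rpow_const 0 _ (Or.inr (sub_pos.2 hαβ).le)).tendsto.mono_left
          nhdsWithin_le_nhds
    simpa using ((hpow.const_mul l).add_const m).abs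
  refine (hfactor.pos_mul_atTop (abs_pos.2 hm)
    (tendsto_rpow_neg_nhdsGT_zero (neg_lt_zero.2 hβ))).congr' ?_
  filter_upwards [self_mem_nhdsWithin] with ε (hε : 0 < ε)
  have hsplit : ε ^ (β - α) * ε ^ (-β) = ε ^ (-α) := by
    rw [← Real.rpow_add hε]; ring_nf
  rw [← abs_of_pos (Real.rpow_pos_of_pos hε (-β)), ← abs_mul,
    abs_of_pos (Real.rpow_pos_of_pos hε _), add_mul, mul_assoc, hsplit]

lemma tendsto_abs_add_mul_rpow_neg_of_lt {l m α β : ℝ} (hαβ : α < β) (hα : 0 < α)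
    (hlm : ¬(l = 0 ∧ m = 0)) :
    Tendsto (fun ε : ℝ => |l * ε ^ (-α) + m * ε ^ (-β)|) (𝓝[>] 0) atTop := by
  rcases eq_or_ne m 0 with rfl | hm
  · simpa using tendsto_abs_mul_rpow_neg_nhdsGT_zero (by tauto : l ≠ 0) hα
  · exact tendsto_abs_add_mul_rpow_neg_of_lt_of_ne_zero hαβ hm (hα.trans hαβ)

lemma tendsto_abs_two_scale_frequency {l m α β : ℝ} (hα : 0 < α) (hβ : 0 < β)
    (hlm : ¬(l = 0 ∧ m = 0)) (hsum : α = β → l + m ≠ 0) :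
    Tendsto (fun ε : ℝ => |l * ε ^ (-α) + m * ε ^ (-β)|) (𝓝[>] 0) atTop := by
  rcases lt_trichotomy α β with hαβ | rfl | hβα
  · exact tendsto_abs_add_mul_rpow_neg_of_lt hαβ hα hlm
  · simpa only [add_mul] using tendsto_abs_mul_rpow_neg_nhdsGT_zero (hsum rfl) hα
  · simpa only [add_comm] using
      tendsto_abs_add_mul_rpow_neg_of_lt hβα hβ (by tauto : ¬(m = 0 ∧ l = 0))

lemma norm_integral_exp_two_pi_mul_I_le {c : ℝ} (hc : c ≠ 0) (a b : ℝ) :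
    ‖∫ x in a..b, Complex.exp (2 * Real.pi * Complex.I * ((c * x : ℝ) : ℂ))‖ ≤
      (Real.pi * |c|)⁻¹ := by
  set ω : ℂ := 2 * Real.pi * Complex.I * c
  have hω : ω ≠ 0 := by simp [ω, hc, Real.pi_ne_zero]
  have hnorm_exp : ∀ x : ℝ, ‖Complex.exp (ω * x)‖ = 1 := fun x => by
    rw [show ω * x = ((2 * Real.pi * c * x : ℝ) : ℂ) * Complex.I by push_cast [ω]; ring,
      Complex.norm_exp_ofReal_mul_I]
  have hnorm_ω : ‖ω‖ = 2 * Real.pi * |c| := by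
    simp [ω, abs_of_pos Real.pi_pos]
  calc ‖∫ x in a..b, Complex.exp (2 * Real.pi * Complex.I * ((c * x : ℝ) : ℂ))‖
      = ‖(Complex.exp (ω * b) - Complex.exp (ω * a)) / ω‖ := by
        rw [← integral_exp_mul_complex hω]; push_cast [ω]; simp only [mul_assoc]
    _ ≤ (1 + 1) / (2 * Real.pi * |c|) := by
        rw [norm_div, hnorm_ω]
        gcongr
        exact (norm_sub_le _ _).trans_eq (by rw [hnorm_exp, hnorm_exp])
    _ = (Real.pi * |c|)⁻¹ := by field_simp; ring

lemma tendsto_integral_exp_two_pi_mul_I {ι : Type*} {l : Filter ι} {c : ι → ℝ}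
    (hc : Tendsto (fun i => |c i|) l atTop) (a b : ℝ) :
    Tendsto (fun i => ∫ x in a..b, Complex.exp (2 * Real.pi * Complex.I * ((c i * x : ℝ) : ℂ)))
      l (𝓝 0) := by
  refine squeeze_zero_norm' ?_ ((hc.const_mul_atTop Real.pi_pos).inv_tendsto_atTop)
  filter_upwards [hc.eventually_gt_atTop 0] with i hi
  exact norm_integral_exp_two_pi_mul_I_le (abs_pos.1 hi) a b

theorem tendsto_integral_const_add_sum_exp {ι κ : Type*} {l : Filter ι} (S : Finset κ)
    (a₀ : ℂ) (A : κ → ℂ) (c : κ → ι → ℝ) (hc : ∀ k ∈ S, Tendsto (fun i => |c k i|) l atTop)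
    (a b : ℝ) :
    Tendsto (fun i => ∫ x in a..b,
        (a₀ + ∑ k ∈ S, A k * Complex.exp (2 * Real.pi * Complex.I * ((c k i * x : ℝ) : ℂ))))
      l (𝓝 (((b - a : ℝ) : ℂ) * a₀)) := by
  have hint : ∀ i, ∫ x in a..b,
        (a₀ + ∑ k ∈ S, A k * Complex.exp (2 * Real.pi * Complex.I * ((c k i * x : ℝ) : ℂ))) =
      ((b - a : ℝ) : ℂ) * a₀ + ∑ k ∈ S, A k *
        ∫ x in a..b, Complex.exp (2 * Real.pi * Complex.I * ((c k i * x : ℝ) : ℂ)) := fun i => by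
    have hcont : ∀ k, Continuous fun x : ℝ =>
        A k * Complex.exp (2 * Real.pi * Complex.I * ((c k i * x : ℝ) : ℂ)) := fun k => by
      fun_prop
    rw [intervalIntegral.integral_add intervalIntegrable_const
        ((continuous_finsetSum S fun k _ => hcont k).intervalIntegrable a b),
      intervalIntegral.integral_const,
      intervalIntegral.integral_finsetSum fun k _ => (hcont k).intervalIntegrable a b]
    simp only [intervalIntegral.integral_const_mul, Complex.real_smul]
  have hmodes := tendsto_finsetSum S fun k hk =>
    (tendsto_integral_exp_two_pi_mul_I (hc k hk) a b).const_mul (A k)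
  simp only [mul_zero, Finset.sum_const_zero] at hmodes
  simpa only [hint, add_zero] using tendsto_const_nhds.add hmodes

theorem trigPoly_two_scale_integral_tendsto_general
    (n m : ℕ)
    (α β : ℝ) (hα : α ∈ Set.Ioo (0 : ℝ) 1) (hβ : β ∈ Set.Ioo (0 : ℝ) 1)
    (S : Finset (Fin (n + m) → ℤ))
    (a₀ : ℂ) (acoef : (Fin (n + m) → ℤ) → ℂ)
    (lam mu : (Fin (n + m) → ℤ) → ℝ)
    (hnz : ∀ k ∈ S, ¬(lam k = 0 ∧ mu k = 0))
    (hsum : α = β → ∀ k ∈ S, lam k + mu k ≠ 0) :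
    ∀ a b : ℝ, a < b →
      Tendsto
        (fun ε : ℝ =>
          ∫ x in a..b,
            (a₀ + ∑ k ∈ S, acoef k *
              Complex.exp (2 * Real.pi * Complex.I *
                ((lam k * x * ε ^ (-α) + mu k * x * ε ^ (-β) : ℝ) : ℂ))))
        (nhdsWithin 0 (Set.Ioi 0))
        (nhds (((b - a : ℝ) : ℂ) * a₀)) := by
  intro a b _
  have hfreq : ∀ k ∈ S, Tendsto (fun ε : ℝ => |lam k * ε ^ (-α) + mu k * ε ^ (-β)|)
      (𝓝[>] 0) atTop := fun k hk =>
    tendsto_abs_two_scale_frequency hα.1 hβ.1 (hnz k hk) fun h => hsum h k hk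
  refine (tendsto_integral_const_add_sum_exp S a₀ acoef _ hfreq a b).congr fun ε => ?_
  congr with x
  congr with k
  ring_nf

/-- The integral over `[a,b]` of a two-scale quasi-periodic trigonometric polynomial
converges to `(b - a)` times its constant Fourier coefficient as `ε → 0⁺`. -/
theorem trigPoly_two_scale_integral_tendsto
    (n m : ℕ) (hn : 1 ≤ n) (hm : 1 ≤ m)
    (L : Fin (n + m) → ℝ) (hL : ∀ j, 0 < L j)
    (α β : ℝ) (hα : α ∈ Set.Ioo (0 : ℝ) 1) (hβ : β ∈ Set.Ioo (0 : ℝ) 1)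
    (S : Finset (Fin (n + m) → ℤ)) (hS : (0 : Fin (n + m) → ℤ) ∉ S)
    (a₀ : ℂ) (acoef : (Fin (n + m) → ℤ) → ℂ)
    (lam mu : (Fin (n + m) → ℤ) → ℝ)
    (hlam : ∀ k, lam k = ∑ j : Fin n, (k (j.castAdd m) : ℝ) / L (j.castAdd m))
    (hmu : ∀ k, mu k = ∑ j : Fin m, (k (j.natAdd n) : ℝ) / L (j.natAdd n))
    (hnz : ∀ k ∈ S, ¬(lam k = 0 ∧ mu k = 0))
    (hsum : α = β → ∀ k ∈ S, lam k + mu k ≠ 0) :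
    ∀ a b : ℝ, a < b →
      Tendsto
        (fun ε : ℝ =>
          ∫ x in a..b,
            (a₀ + ∑ k ∈ S, acoef k *
              Complex.exp (2 * Real.pi * Complex.I *
                ((lam k * x * ε ^ (-α) + mu k * x * ε ^ (-β) : ℝ) : ℂ))))
        (nhdsWithin 0 (Set.Ioi 0))
        (nhds (((b - a : ℝ) : ℂ) * a₀)) :=
  trigPoly_two_scale_integral_tendsto_general n m α β hα hβ S a₀ acoef lam mu hnz hsum
end

section
/- Let L_1, L_2 > 0 with L_1/L_2 irrational, and let g, h : ℝ → ℝ be continuous functions with g being L_1-periodic and h being L_2-periodic, satisfying g(y) + h(z) ≥ c for all y, z ∈ ℝ and some constant c > 0. Then the limit lim_{T→∞} (1/T) ∫_0^T 1/(g(y) + h(y)) dy exists and equals (1/(L_1 L_2)) ∫_0^{L_1} ∫_0^{L_2} 1/(g(y) + h(z)) dz dy. -/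
/-!
Lifting `g` and `h` to the circles `ℝ/L₁ℤ` and `ℝ/L₂ℤ`, the integrand `(g y + h z)⁻¹` becomes a
continuous function on the torus `ℝ/L₁ℤ × ℝ/L₂ℤ`, and the left-hand side is its average along the
line `t ↦ (t, t)`. For the character `(y, z) ↦ exp (2πi (m y / L₁ + n z / L₂))` this line average
is the average of `exp (iθt)` with `θ = 2π (m / L₁ + n / L₂)`; irrationality of `L₁ / L₂` makes
`θ ≠ 0` unless `m = n = 0`, so it tends to `0`, the cell average of a nontrivial character. By
Stone–Weierstrass the characters span a dense subspace of the continuous functions, and all these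
averages are linear functionals of norm at most one, so the convergence extends to every continuous
function on the torus (Weyl equidistribution of the line).
-/

open MeasureTheory Filter Set intervalIntegral Complex Real Topology
open scoped NNReal

theorem tendsto_apply_of_span_dense {𝕜 E F ι : Type*} [NontriviallyNormedField 𝕜]
    [SeminormedAddCommGroup E] [NormedSpace 𝕜 E] [SeminormedAddCommGroup F] [NormedSpace 𝕜 F]
    {l : Filter ι} {A : ι → E →L[𝕜] F} {B : E →L[𝕜] F} {C : ℝ≥0} (hA : ∀ i, ‖A i‖₊ ≤ C)
    {s : Set E} (hs : (Submodule.span 𝕜 s).topologicalClosure = ⊤)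
    (h : ∀ x ∈ s, Tendsto (fun i ↦ A i x) l (𝓝 (B x))) (x : E) :
    Tendsto (fun i ↦ A i x) l (𝓝 (B x)) := by
  let S : Submodule 𝕜 E :=
    { carrier := {x | Tendsto (fun i ↦ A i x) l (𝓝 (B x))}
      add_mem' := fun hx hy ↦ by simpa only [mem_ofPred_eq, map_add] using hx.add hy
      zero_mem' := by simpa only [mem_ofPred_eq, map_zero] using tendsto_const_nhds
      smul_mem' := fun c x hx ↦ by simpa only [mem_ofPred_eq, map_smul] using hx.const_smul c }
  have hS : IsClosed (S : Set E) :=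
    (LipschitzWith.uniformEquicontinuous _ C fun i ↦ (A i).lipschitz.weaken (hA i)).equicontinuous
      |>.isClosed_setOfPred_tendsto B.continuous
  have hspan : (Submodule.span 𝕜 s).topologicalClosure ≤ S :=
    Submodule.topologicalClosure_minimal _ (Submodule.span_le.2 h) hS
  exact hspan (hs ▸ Submodule.mem_top)

section CurveAverage

variable {X : Type*} [TopologicalSpace X] [CompactSpace X]

noncomputable def curveAverage (γ : C(ℝ, X)) (T : ℝ) : C(X, ℂ) →L[ℂ] ℂ :=
  LinearMap.mkContinuous
    { toFun F := T⁻¹ • ∫ t in 0..T, F (γ t)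
      map_add' F G := by
        have hF : IntervalIntegrable (fun t ↦ F (γ t)) volume 0 T :=
          (F.comp γ).continuous.intervalIntegrable _ _
        have hG : IntervalIntegrable (fun t ↦ G (γ t)) volume 0 T :=
          (G.comp γ).continuous.intervalIntegrable _ _
        simp only [ContinuousMap.add_apply, integral_add hF hG, smul_add]
      map_smul' a F := by
        simp only [ContinuousMap.smul_apply, intervalIntegral.integral_smul, RingHom.id_apply]
        exact smul_comm _ _ _ }
    1 fun F ↦ by
      have hint : ‖∫ t in 0..T, F (γ t)‖ ≤ ‖F‖ * |T| := by
        simpa using norm_integral_le_of_norm_le_const (a := 0) (b := T)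
          fun t _ ↦ F.norm_coe_le_norm (γ t)
      rcases eq_or_ne T 0 with rfl | hT
      · simp
      · rw [LinearMap.coe_mk, AddHom.coe_mk, norm_smul, norm_inv, Real.norm_eq_abs, one_mul,
          inv_mul_le_iff₀ (abs_pos.2 hT)]
        exact hint.trans_eq (mul_comm _ _)

theorem curveAverage_apply (γ : C(ℝ, X)) (T : ℝ) (F : C(X, ℂ)) :
    curveAverage γ T F = T⁻¹ • ∫ t in 0..T, F (γ t) := rfl

theorem norm_curveAverage_le (γ : C(ℝ, X)) (T : ℝ) : ‖curveAverage γ T‖₊ ≤ 1 :=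
  LinearMap.mkContinuous_norm_le _ zero_le_one _

end CurveAverage

theorem div_add_div_eq_zero_iff_of_irrational {a b : ℝ} (hab : Irrational (a / b)) {m n : ℤ} :
    m / a + n / b = 0 ↔ m = 0 ∧ n = 0 := by
  have ha : a ≠ 0 := by rintro rfl; simpa using hab.ne_rational 0 1
  have hb : b ≠ 0 := by rintro rfl; simpa using hab.ne_rational 0 1
  refine ⟨fun h ↦ ?_, by rintro ⟨rfl, rfl⟩; simp⟩
  have hmn : (m : ℝ) * b = -n * a := by field_simp at h; linarith
  obtain rfl | hn := eq_or_ne n 0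
  · simpa [hb] using hmn
  · refine absurd ?_ (hab.ne_rational (-m) n)
    rw [eq_div_iff (by exact_mod_cast hn), div_mul_eq_mul_div, div_eq_iff hb]
    push_cast; linarith

theorem tendsto_average_exp_mul_I (θ : ℝ) :
    Tendsto (fun T : ℝ ↦ T⁻¹ • ∫ t in 0..T, exp (θ * I * t)) atTop
      (𝓝 (if θ = 0 then 1 else 0)) := by
  split_ifs with hθ
  · refine tendsto_const_nhds.congr' ?_
    filter_upwards [eventually_ne_atTop 0] with T hT
    simp [hθ, hT]
  · have hc : (θ : ℂ) * I ≠ 0 := by simpa using hθ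
    have hbound : ∀ T : ℝ, ‖∫ t in 0..T, exp (θ * I * t)‖ ≤ 2 / |θ| := fun T ↦ by
      rw [integral_exp_mul_complex hc, norm_div]
      gcongr
      · calc _ ≤ ‖exp (θ * I * T)‖ + ‖exp (θ * I * 0)‖ := norm_sub_le _ _
          _ = 2 := by norm_num [norm_exp]
      · simp
    exact tendsto_inv_atTop_zero.zero_smul_isBoundedUnder_le
      (isBoundedUnder_of ⟨2 / |θ|, hbound⟩)

theorem intervalIntegral_fourier {T : ℝ} [hT : Fact (0 < T)] (n : ℤ) :
    ∫ t in 0..T, fourier n (t : AddCircle T) = if n = 0 then (T : ℂ) else 0 := by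
  have h := fourierCoeff_eq_intervalIntegral (T := T) (fourier n) 0 0
  rw [fourierCoeff_fourier, neg_zero, zero_add] at h
  simp only [fourier_zero, one_smul] at h
  calc _ = (T * (1 / T)) • ∫ t in 0..T, fourier n (t : AddCircle T) := by
        rw [mul_one_div_cancel hT.out.ne', one_smul]
    _ = _ := by rw [mul_smul, ← h]; simp [Pi.single_apply, eq_comm]

theorem fourier_one_injective {T : ℝ} (hT : T ≠ 0) :
    Function.Injective (fourier 1 : AddCircle T → ℂ) :=
  fun _ _ h ↦ AddCircle.injective_toCircle hT (by simpa [Circle.coe_inj] using h)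

section Torus

variable (L₁ L₂ : ℝ)

noncomputable def torusChar (m n : ℤ) : C(AddCircle L₁ × AddCircle L₂, ℂ) :=
  (fourier m).comp .fst * (fourier n).comp .snd

variable {L₁ L₂} in
@[simp]
theorem torusChar_apply (m n : ℤ) (p : AddCircle L₁ × AddCircle L₂) :
    torusChar L₁ L₂ m n p = fourier m p.1 * fourier n p.2 := rfl

noncomputable def torusCharSubalgebra : StarSubalgebra ℂ C(AddCircle L₁ × AddCircle L₂, ℂ) where
  toSubalgebra := Algebra.adjoin ℂ (range (Function.uncurry (torusChar L₁ L₂)))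
  star_mem' := by
    change _ ≤ star (Algebra.adjoin ℂ _)
    refine Algebra.adjoin_le ?_
    rintro _ ⟨⟨m, n⟩, rfl⟩
    refine Algebra.subset_adjoin ⟨(-m, -n), ?_⟩
    ext p
    simp

theorem torusCharSubalgebra_coe : (torusCharSubalgebra L₁ L₂).toSubalgebra.toSubmodule =
    Submodule.span ℂ (range (Function.uncurry (torusChar L₁ L₂))) := by
  apply Algebra.adjoin_eq_span_of_subset
  refine Set.Subset.trans (fun F hF ↦ ?_) Submodule.subset_span
  induction hF using Submonoid.closure_induction with
  | mem F hF => exact hF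
  | one => exact ⟨(0, 0), by ext; simp⟩
  | mul F G _ _ hF hG =>
    obtain ⟨⟨m, n⟩, rfl⟩ := hF
    obtain ⟨⟨m', n'⟩, rfl⟩ := hG
    exact ⟨(m + m', n + n'), by ext; simp; ring⟩

def torusDiagonal : C(ℝ, AddCircle L₁ × AddCircle L₂) :=
  ⟨fun t ↦ (t, t), by fun_prop⟩

variable {L₁ L₂} in
theorem torusChar_torusDiagonal (m n : ℤ) (t : ℝ) :
    torusChar L₁ L₂ m n (torusDiagonal L₁ L₂ t) =
      exp ((2 * π * (m / L₁ + n / L₂) : ℝ) * I * t) := by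
  simp only [torusDiagonal, ContinuousMap.coe_mk, torusChar_apply, fourier_coe_apply,
    ← Complex.exp_add]
  congr 1
  push_cast
  ring

theorem continuous_intervalIntegral_torus (F : C(AddCircle L₁ × AddCircle L₂, ℂ)) (a b : ℝ) :
    Continuous fun y : ℝ ↦ ∫ z in a..b, F (y, z) :=
  continuous_parametric_intervalIntegral_of_continuous' (by fun_prop) a b

theorem intervalIntegrable_torus_slice (F : C(AddCircle L₁ × AddCircle L₂, ℂ)) (y a b : ℝ) :
    IntervalIntegrable (fun z : ℝ ↦ F (y, z)) volume a b :=
  (by fun_prop : Continuous fun z : ℝ ↦ F (y, z)).intervalIntegrable a b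

variable [Fact (0 < L₁)] [Fact (0 < L₂)]

theorem torusCharSubalgebra_separatesPoints : (torusCharSubalgebra L₁ L₂).SeparatesPoints := by
  rintro ⟨x₁, x₂⟩ ⟨y₁, y₂⟩ hxy
  obtain h₁ | h₂ : x₁ ≠ y₁ ∨ x₂ ≠ y₂ := not_and_or.mp (by simpa using hxy)
  · refine ⟨_, ⟨torusChar L₁ L₂ 1 0, Algebra.subset_adjoin ⟨(1, 0), rfl⟩, rfl⟩, ?_⟩
    simpa using (fourier_one_injective (Fact.out : 0 < L₁).ne').ne h₁
  · refine ⟨_, ⟨torusChar L₁ L₂ 0 1, Algebra.subset_adjoin ⟨(0, 1), rfl⟩, rfl⟩, ?_⟩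
    simpa using (fourier_one_injective (Fact.out : 0 < L₂).ne').ne h₂

theorem span_torusChar_closure_eq_top :
    (Submodule.span ℂ (range (Function.uncurry (torusChar L₁ L₂)))).topologicalClosure = ⊤ := by
  rw [← torusCharSubalgebra_coe]
  exact congr_arg (Subalgebra.toSubmodule <| StarSubalgebra.toSubalgebra ·)
    (ContinuousMap.starSubalgebra_topologicalClosure_eq_top_of_separatesPoints _
      (torusCharSubalgebra_separatesPoints L₁ L₂))

noncomputable def cellAverage : C(AddCircle L₁ × AddCircle L₂, ℂ) →L[ℂ] ℂ :=
  LinearMap.mkContinuous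
    { toFun F := (L₁ * L₂)⁻¹ • ∫ y in 0..L₁, ∫ z in 0..L₂, F (y, z)
      map_add' F G := by
        have hslice y := integral_add (intervalIntegrable_torus_slice L₁ L₂ F y 0 L₂)
          (intervalIntegrable_torus_slice L₁ L₂ G y 0 L₂)
        simp only [ContinuousMap.add_apply, hslice, smul_add,
          integral_add ((continuous_intervalIntegral_torus L₁ L₂ F 0 L₂).intervalIntegrable 0 L₁)
            ((continuous_intervalIntegral_torus L₁ L₂ G 0 L₂).intervalIntegrable 0 L₁)]
      map_smul' a F := by
        simp only [ContinuousMap.smul_apply, intervalIntegral.integral_smul, RingHom.id_apply]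
        exact smul_comm _ _ _ }
    1 fun F ↦ by
      have hL₁ : 0 < L₁ := Fact.out
      have hL₂ : 0 < L₂ := Fact.out
      have hinner y : ‖∫ z in 0..L₂, F (y, z)‖ ≤ ‖F‖ * L₂ := by
        simpa [abs_of_pos hL₂] using norm_integral_le_of_norm_le_const (a := 0) (b := L₂)
          fun z _ ↦ F.norm_coe_le_norm (y, z)
      have houter : ‖∫ y in 0..L₁, ∫ z in 0..L₂, F (y, z)‖ ≤ ‖F‖ * L₂ * L₁ := by
        simpa [abs_of_pos hL₁] using norm_integral_le_of_norm_le_const (a := 0) (b := L₁)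
          fun y _ ↦ hinner y
      rw [LinearMap.coe_mk, AddHom.coe_mk, norm_smul, norm_inv, Real.norm_eq_abs, one_mul,
        abs_of_pos (by positivity), inv_mul_le_iff₀ (by positivity)]
      linarith

theorem cellAverage_apply (F : C(AddCircle L₁ × AddCircle L₂, ℂ)) :
    cellAverage L₁ L₂ F = (L₁ * L₂)⁻¹ • ∫ y in 0..L₁, ∫ z in 0..L₂, F (y, z) := rfl

theorem cellAverage_torusChar (m n : ℤ) :
    cellAverage L₁ L₂ (torusChar L₁ L₂ m n) = if m = 0 ∧ n = 0 then 1 else 0 := by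
  have hcell : ((L₁ * L₂)⁻¹ : ℝ) • ((L₁ : ℂ) * L₂) = 1 := by
    have hL₁ : (L₁ : ℂ) ≠ 0 := by exact_mod_cast (Fact.out : 0 < L₁).ne'
    have hL₂ : (L₂ : ℂ) ≠ 0 := by exact_mod_cast (Fact.out : 0 < L₂).ne'
    rw [Complex.real_smul]
    push_cast
    field_simp
  simp only [cellAverage_apply, torusChar_apply, intervalIntegral.integral_const_mul,
    intervalIntegral.integral_mul_const, intervalIntegral_fourier]
  split_ifs <;> simp_all

theorem tendsto_curveAverage_torusChar (hirr : Irrational (L₁ / L₂)) (m n : ℤ) :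
    Tendsto (fun T ↦ curveAverage (torusDiagonal L₁ L₂) T (torusChar L₁ L₂ m n)) atTop
      (𝓝 (cellAverage L₁ L₂ (torusChar L₁ L₂ m n))) := by
  have hfreq : 2 * π * (m / L₁ + n / L₂) = 0 ↔ m = 0 ∧ n = 0 := by
    rw [mul_eq_zero, or_iff_right (by positivity), div_add_div_eq_zero_iff_of_irrational hirr]
  simp only [curveAverage_apply, torusChar_torusDiagonal, cellAverage_torusChar, ← hfreq]
  exact tendsto_average_exp_mul_I _

theorem tendsto_curveAverage_torusDiagonal (hirr : Irrational (L₁ / L₂))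
    (F : C(AddCircle L₁ × AddCircle L₂, ℂ)) :
    Tendsto (fun T ↦ curveAverage (torusDiagonal L₁ L₂) T F) atTop (𝓝 (cellAverage L₁ L₂ F)) :=
  tendsto_apply_of_span_dense (norm_curveAverage_le _) (span_torusChar_closure_eq_top L₁ L₂)
    (by rintro _ ⟨⟨m, n⟩, rfl⟩; exact tendsto_curveAverage_torusChar L₁ L₂ hirr m n) F

theorem tendsto_average_torusDiagonal_real (hirr : Irrational (L₁ / L₂))
    (F : C(AddCircle L₁ × AddCircle L₂, ℝ)) :
    Tendsto (fun T ↦ T⁻¹ * ∫ t in 0..T, F (t, t)) atTop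
      (𝓝 ((L₁ * L₂)⁻¹ * ∫ y in 0..L₁, ∫ z in 0..L₂, F (y, z))) := by
  have h := tendsto_curveAverage_torusDiagonal L₁ L₂ hirr ((ofRealCLM : C(ℝ, ℂ)).comp F)
  rw [← tendsto_ofReal_iff]
  simpa [curveAverage_apply, cellAverage_apply, torusDiagonal, intervalIntegral.integral_ofReal,
    Complex.real_smul] using h

end Torus

/-- Mean value of the reciprocal of a sum of two periodic functions with incommensurable
periods equals the average over the periodicity cell. -/
theorem mean_value_reciprocal_sum_two_periods
    (L₁ L₂ : ℝ) (hL₁ : 0 < L₁) (hL₂ : 0 < L₂) (hirr : Irrational (L₁ / L₂))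
    (g h : ℝ → ℝ) (hgcont : Continuous g) (hhcont : Continuous h)
    (hgper : ∀ x, g (x + L₁) = g x) (hhper : ∀ x, h (x + L₂) = h x)
    (c : ℝ) (hc : 0 < c) (hlb : ∀ y z : ℝ, c ≤ g y + h z) :
    Tendsto (fun T : ℝ => (1 / T) * ∫ y in (0 : ℝ)..T, (g y + h y)⁻¹)
      atTop
      (nhds ((1 / (L₁ * L₂)) *
        ∫ y in (0 : ℝ)..L₁, ∫ z in (0 : ℝ)..L₂, (g y + h z)⁻¹)) := by
  have : Fact (0 < L₁) := ⟨hL₁⟩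
  have : Fact (0 < L₂) := ⟨hL₂⟩
  let G : AddCircle L₁ → ℝ := Function.Periodic.lift hgper
  let H : AddCircle L₂ → ℝ := Function.Periodic.lift hhper
  have hpos : ∀ p : AddCircle L₁ × AddCircle L₂, G p.1 + H p.2 ≠ 0 := by
    rintro ⟨⟨y⟩, ⟨z⟩⟩
    exact (hc.trans_le (hlb y z)).ne'
  let F : C(AddCircle L₁ × AddCircle L₂, ℝ) :=
    ⟨fun p ↦ (G p.1 + H p.2)⁻¹, ((hgcont.quotient_liftOn' _).comp continuous_fst).add
      ((hhcont.quotient_liftOn' _).comp continuous_snd) |>.inv₀ hpos⟩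
  have hF : ∀ y z : ℝ, F (y, z) = (g y + h z)⁻¹ := fun _ _ ↦ rfl
  simpa only [hF, one_div] using tendsto_average_torusDiagonal_real L₁ L₂ hirr F
end

section
/- Let I = [a,b] ⊂ ℝ with a < b, let γ > 0, ε ∈ (0,1), let K : I → ℝ be continuous with 0 < K_0 ≤ K(x) ≤ K_1, and let H : I → ℝ be measurable with 0 ≤ H(x) ≤ H_1, where ε^γ H_1 ≤ K_0. Define R_a^ε = {(x,y) ∈ ℝ² : x ∈ I, 0 < y < ε K(x)} and the narrow strip θ₁^ε = {(x,y) ∈ ℝ² : x ∈ I, ε(K(x) − ε^γ H(x)) < y < ε K(x)}. Then for every function v that is continuously differentiable on an open set containing the closure of R_a^ε, (1/ε^γ) ∫_{θ₁^ε} v² dx dy ≤ (2H_1/K_0) ∫_{R_a^ε} v² dx dy + ε² H_1 K_1 ∫_{R_a^ε} (∂v/∂y)² dx dy. -/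
/-!
On a vertical slice `{x} × [0, εK(x)]`, write `w(t) = v(x, t)`. The fundamental theorem of
calculus and Young's inequality `2|w w'| ≤ w²/S + S w'²` give
`w(y)² ≤ w(z)² + (1/S) ∫ w² + S ∫ w'²` for any two points of the slice; taking `z` where `w²` is
at most its mean bounds `w(y)²` uniformly by `(1/(εK) + 1/S) ∫ w² + S ∫ w'²`. Integrating over
the part of the slice in the strip, of length `ε^(1+γ) H(x)`, with `S = εK₁`, and then over `x`
(Fubini) gives the estimate.
-/

open MeasureTheory Set
open scoped Interval

lemma abs_two_mul_mul_le_div_add_mul_sq {s : ℝ} (hs : 0 < s) (a b : ℝ) :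
    |2 * a * b| ≤ a ^ 2 / s + s * b ^ 2 := by
  rw [div_add' _ _ _ hs.ne', le_div_iff₀ hs, abs_mul, abs_mul, abs_two, ← sq_abs a,
    ← sq_abs b]
  nlinarith [sq_nonneg (|a| - s * |b|)]

section OneDimensional

variable {w w' : ℝ → ℝ} {l r s : ℝ}

lemma sq_le_sq_add_integral_of_hasDerivAt (hw : ∀ t ∈ Icc l r, HasDerivAt w (w' t) t)
    (hw' : ContinuousOn w' (Icc l r)) (hs : 0 < s) {y z : ℝ} (hy : y ∈ Icc l r)
    (hz : z ∈ Icc l r) :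
    w y ^ 2 ≤ w z ^ 2 + (∫ t in Ioo l r, w t ^ 2) / s + s * ∫ t in Ioo l r, w' t ^ 2 := by
  have hwc : ContinuousOn w (Icc l r) := fun t ht => (hw t ht).continuousAt.continuousWithinAt
  have hzy : uIcc z y ⊆ Icc l r := uIcc_subset_Icc hz hy
  have hw2 : IntegrableOn (fun t => w t ^ 2) (Icc l r) :=
    (hwc.pow 2).integrableOn_compact isCompact_Icc
  have hw'2 : IntegrableOn (fun t => w' t ^ 2) (Icc l r) :=
    (hw'.pow 2).integrableOn_compact isCompact_Icc
  have hQ : IntegrableOn (fun t => w t ^ 2 / s + s * w' t ^ 2) (Icc l r) :=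
    (hw2.div_const s).add (hw'2.const_mul s)
  have hftc : ∫ t in z..y, 2 * w t * w' t = w y ^ 2 - w z ^ 2 :=
    intervalIntegral.integral_eq_sub_of_hasDerivAt
      (fun t ht => by simpa [mul_assoc] using (hw t (hzy ht)).pow 2)
      (((continuousOn_const.mul hwc).mul hw').mono hzy).intervalIntegrable
  have hIoc : Ι z y ⊆ Ioc l r := Ioc_subset_Ioc (le_min hz.1 hy.1) (max_le hz.2 hy.2)
  calc w y ^ 2 = w z ^ 2 + ∫ t in z..y, 2 * w t * w' t := by rw [hftc]; ring
    _ ≤ w z ^ 2 + ‖(∫ t in Ι z y, 2 * w t * w' t : ℝ)‖ := by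
      rw [← intervalIntegral.norm_integral_eq_norm_integral_uIoc (fun t => 2 * w t * w' t)]
      exact add_le_add le_rfl (le_abs_self _)
    _ ≤ w z ^ 2 + ∫ t in Ι z y, (w t ^ 2 / s + s * w' t ^ 2) := by
      gcongr
      exact norm_integral_le_of_norm_le (hQ.mono_set (hIoc.trans Ioc_subset_Icc_self))
        (ae_restrict_of_forall_mem measurableSet_uIoc fun t _ =>
          abs_two_mul_mul_le_div_add_mul_sq hs _ _)
    _ ≤ w z ^ 2 + ∫ t in Ioc l r, (w t ^ 2 / s + s * w' t ^ 2) := by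
      exact add_le_add le_rfl (setIntegral_mono_set (hQ.mono_set Ioc_subset_Icc_self)
        (ae_of_all _ fun t => by positivity) hIoc.eventuallyLE)
    _ = w z ^ 2 + (∫ t in Ioo l r, w t ^ 2) / s + s * ∫ t in Ioo l r, w' t ^ 2 := by
      rw [integral_Ioc_eq_integral_Ioo,
        integral_add ((hw2.mono_set Ioo_subset_Icc_self).div_const s)
          ((hw'2.mono_set Ioo_subset_Icc_self).const_mul s), integral_div, integral_const_mul]
      ring

lemma sq_le_integral_sq_add_integral_deriv_sq (hlr : l < r)
    (hw : ∀ t ∈ Icc l r, HasDerivAt w (w' t) t) (hw' : ContinuousOn w' (Icc l r)) (hs : 0 < s)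
    {y : ℝ} (hy : y ∈ Icc l r) :
    w y ^ 2 ≤ (1 / (r - l) + 1 / s) * (∫ t in Ioo l r, w t ^ 2) +
      s * ∫ t in Ioo l r, w' t ^ 2 := by
  have hwc : ContinuousOn w (Icc l r) := fun t ht => (hw t ht).continuousAt.continuousWithinAt
  have hw2 : IntegrableOn (fun t => w t ^ 2) (Ioo l r) :=
    ((hwc.pow 2).integrableOn_compact isCompact_Icc).mono_set Ioo_subset_Icc_self
  obtain ⟨z, hz, hz_le_mean⟩ := exists_le_setAverage (by simp [hlr]) (by simp) hw2
  rw [setAverage_eq, Real.volume_real_Ioo_of_le hlr.le, smul_eq_mul] at hz_le_mean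
  have hyz := sq_le_sq_add_integral_of_hasDerivAt hw hw' hs hy (Ioo_subset_Icc_self hz)
  rw [div_eq_inv_mul] at hyz
  rw [add_mul, one_div, one_div]
  linarith

lemma setIntegral_sq_le_of_hasDerivAt (hlr : l < r)
    (hw : ∀ t ∈ Icc l r, HasDerivAt w (w' t) t) (hw' : ContinuousOn w' (Icc l r)) (hs : 0 < s)
    {J : Set ℝ} (hJ : J ⊆ Icc l r) :
    ∫ y in J, w y ^ 2 ≤ volume.real J * ((1 / (r - l) + 1 / s) * (∫ t in Ioo l r, w t ^ 2) +
      s * ∫ t in Ioo l r, w' t ^ 2) := by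
  rw [mul_comm]
  refine (Real.le_norm_self _).trans (norm_setIntegral_le_of_norm_le_const
    ((measure_mono hJ).trans_lt measure_Icc_lt_top) fun y hy => ?_)
  rw [Real.norm_eq_abs, abs_of_nonneg (sq_nonneg _)]
  exact sq_le_integral_sq_add_integral_deriv_sq hlr hw hw' hs (hJ hy)

end OneDimensional

section RegionBetween

variable {α : Type*} {f g : α → ℝ} {s : Set α}

lemma regionBetween_congr {f' g' : α → ℝ} (hf : EqOn f f' s) (hg : EqOn g g' s) :
    regionBetween f g s = regionBetween f' g' s := by
  ext ⟨x, y⟩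
  exact and_congr_right fun hx => by rw [hf hx, hg hx]

lemma mk_mem_closure_regionBetween [TopologicalSpace α] {x : α} {t : ℝ} (hx : x ∈ s)
    (hfg : f x < g x) (ht : t ∈ Icc (f x) (g x)) :
    (x, t) ∈ closure (regionBetween f g s) := by
  have hslice : ({x} : Set α) ×ˢ Ioo (f x) (g x) ⊆ regionBetween f g s := by
    rintro ⟨x', y⟩ ⟨rfl, hy⟩
    exact ⟨hx, hy⟩
  refine closure_mono hslice ?_
  rw [closure_prod_eq, closure_Ioo hfg.ne]
  exact ⟨subset_closure rfl, ht⟩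

variable {E : Type*} [NormedAddCommGroup E] [NormedSpace ℝ E] {F : α × ℝ → E}

lemma integral_indicator_regionBetween_mk (x : α) :
    ∫ y, (regionBetween f g s).indicator F (x, y) =
      s.indicator (fun x => ∫ y in Ioo (f x) (g x), F (x, y)) x := by
  by_cases hx : x ∈ s
  · rw [indicator_of_mem hx, ← integral_indicator measurableSet_Ioo]
    congr 1 with y
    simp [regionBetween, indicator, hx]
  · simp [regionBetween, indicator, hx]

variable [MeasureSpace α]

lemma setIntegral_regionBetween [SFinite (volume : Measure α)] (hf : Measurable f)
    (hg : Measurable g) (hs : MeasurableSet s) (hF : IntegrableOn F (regionBetween f g s)) :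
    ∫ p in regionBetween f g s, F p = ∫ x in s, ∫ y in Ioo (f x) (g x), F (x, y) := by
  have hR := measurableSet_regionBetween hf hg hs
  rw [← integral_indicator hR, Measure.volume_eq_prod,
    integral_prod _ ((integrable_indicator_iff hR).2 hF), ← integral_indicator hs]
  simp_rw [integral_indicator_regionBetween_mk]

lemma integrableOn_integral_regionBetween (hf : Measurable f) (hg : Measurable g)
    (hs : MeasurableSet s) (hF : IntegrableOn F (regionBetween f g s)) :
    IntegrableOn (fun x => ∫ y in Ioo (f x) (g x), F (x, y)) s := by
  have hR := measurableSet_regionBetween hf hg hs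
  have h := ((integrable_indicator_iff hR).2 hF).integral_prod_left
  simp_rw [integral_indicator_regionBetween_mk] at h
  exact (integrable_indicator_iff hs).1 h

end RegionBetween

lemma DifferentiableAt.hasDerivAt_comp_mk {E F : Type*} [NormedAddCommGroup E]
    [NormedSpace ℝ E] [NormedAddCommGroup F] [NormedSpace ℝ F] {v : E × ℝ → F} {x : E} {t : ℝ}
    (hv : DifferentiableAt ℝ v (x, t)) :
    HasDerivAt (fun t => v (x, t)) (fderiv ℝ v (x, t) (0, 1)) t :=
  hv.hasFDerivAt.comp_hasDerivAt t ((hasDerivAt_const t x).prodMk (hasDerivAt_id t))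

lemma ContDiffOn.continuousOn_fderiv_apply {E F : Type*} [NormedAddCommGroup E]
    [NormedSpace ℝ E] [NormedAddCommGroup F] [NormedSpace ℝ F] {v : E → F} {U : Set E}
    (hU : IsOpen U) (hv : ContDiffOn ℝ 1 v U) (e : E) :
    ContinuousOn (fun p => fderiv ℝ v p e) U :=
  (hv.continuousOn_fderiv_of_isOpen hU le_rfl).clm_apply continuousOn_const

lemma setIntegral_sq_slice_le {v : ℝ × ℝ → ℝ} {U : Set (ℝ × ℝ)} (hU : IsOpen U)
    (hv : ContDiffOn ℝ 1 v U) {x l r s : ℝ} (hlr : l < r) (hs : 0 < s)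
    (hslice : ∀ t ∈ Icc l r, (x, t) ∈ U) {J : Set ℝ} (hJ : J ⊆ Icc l r) :
    ∫ y in J, v (x, y) ^ 2 ≤ volume.real J * ((1 / (r - l) + 1 / s) *
      (∫ t in Ioo l r, v (x, t) ^ 2) + s * ∫ t in Ioo l r, fderiv ℝ v (x, t) (0, 1) ^ 2) :=
  setIntegral_sq_le_of_hasDerivAt hlr
    (fun t ht => ((hv.differentiableOn one_ne_zero).differentiableAt
      (hU.mem_nhds (hslice t ht))).hasDerivAt_comp_mk)
    ((hv.continuousOn_fderiv_apply hU (0, 1)).comp (by fun_prop) hslice) hs hJ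

theorem setIntegral_regionBetween_sq_le {s : Set ℝ} (hs : MeasurableSet s) {g lo hi : ℝ → ℝ}
    (hg : Measurable g) (hlo : Measurable lo) (hhi : Measurable hi)
    (horder : ∀ x ∈ s, g x ≤ lo x ∧ lo x ≤ hi x ∧ g x < hi x) {S M₁ M₂ : ℝ} (hS : 0 < S)
    (hM₁ : ∀ x ∈ s, (hi x - lo x) * (1 / (hi x - g x) + 1 / S) ≤ M₁)
    (hM₂ : ∀ x ∈ s, (hi x - lo x) * S ≤ M₂) (hbdd : Bornology.IsBounded (regionBetween g hi s))
    {v : ℝ × ℝ → ℝ} {U : Set (ℝ × ℝ)} (hU : IsOpen U)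
    (hRU : closure (regionBetween g hi s) ⊆ U) (hv : ContDiffOn ℝ 1 v U) :
    ∫ p in regionBetween lo hi s, v p ^ 2 ≤
      M₁ * (∫ p in regionBetween g hi s, v p ^ 2) +
        M₂ * ∫ p in regionBetween g hi s, fderiv ℝ v p (0, 1) ^ 2 := by
  have hstrip : regionBetween lo hi s ⊆ regionBetween g hi s :=
    fun p ⟨hx, hlo_lt, hlt_hi⟩ => ⟨hx, (horder _ hx).1.trans_lt hlo_lt, hlt_hi⟩
  have hv2 : IntegrableOn (fun p => v p ^ 2) (regionBetween g hi s) :=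
    (((hv.continuousOn.mono hRU).pow 2).integrableOn_compact
      hbdd.isCompact_closure).mono_set subset_closure
  have hdv2 : IntegrableOn (fun p => fderiv ℝ v p (0, 1) ^ 2) (regionBetween g hi s) :=
    ((((hv.continuousOn_fderiv_apply hU (0, 1)).mono hRU).pow 2).integrableOn_compact
      hbdd.isCompact_closure).mono_set subset_closure
  rw [setIntegral_regionBetween hlo hhi hs (hv2.mono_set hstrip),
    setIntegral_regionBetween hg hhi hs hv2, setIntegral_regionBetween hg hhi hs hdv2,
    ← integral_const_mul, ← integral_const_mul,
    ← integral_add ((integrableOn_integral_regionBetween hg hhi hs hv2).const_mul M₁)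
      ((integrableOn_integral_regionBetween hg hhi hs hdv2).const_mul M₂)]
  refine setIntegral_mono_on (integrableOn_integral_regionBetween hlo hhi hs (hv2.mono_set hstrip))
    (((integrableOn_integral_regionBetween hg hhi hs hv2).const_mul M₁).add
      ((integrableOn_integral_regionBetween hg hhi hs hdv2).const_mul M₂)) hs fun x hx => ?_
  obtain ⟨hg_lo, hlo_hi, hg_hi⟩ := horder x hx
  have hslice := setIntegral_sq_slice_le hU hv hg_hi hS
    (fun t ht => hRU (mk_mem_closure_regionBetween hx hg_hi ht))
    (Ioo_subset_Icc_self.trans (Icc_subset_Icc_left hg_lo))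
  rw [Real.volume_real_Ioo_of_le hlo_hi] at hslice
  have hA : 0 ≤ ∫ t in Ioo (g x) (hi x), v (x, t) ^ 2 :=
    setIntegral_nonneg measurableSet_Ioo fun _ _ => sq_nonneg _
  have hC : 0 ≤ ∫ t in Ioo (g x) (hi x), fderiv ℝ v (x, t) (0, 1) ^ 2 :=
    setIntegral_nonneg measurableSet_Ioo fun _ _ => sq_nonneg _
  linarith [mul_le_mul_of_nonneg_right (hM₁ x hx) hA, mul_le_mul_of_nonneg_right (hM₂ x hx) hC]

theorem setIntegral_thinStrip_sq_le {s : Set ℝ} (hs : MeasurableSet s)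
    (hsb : Bornology.IsBounded s) {ε δ K₀ K₁ H₁ : ℝ} {K H : ℝ → ℝ} (hε : 0 < ε) (hδ : 0 ≤ δ)
    (hK : Measurable K) (hK₀ : 0 < K₀) (hK₁ : 0 < K₁) (hKbd : ∀ x ∈ s, K₀ ≤ K x ∧ K x ≤ K₁)
    (hH : Measurable H) (hHbd : ∀ x ∈ s, 0 ≤ H x ∧ H x ≤ H₁) (hsmall : δ * H₁ ≤ K₀)
    {v : ℝ × ℝ → ℝ} {U : Set (ℝ × ℝ)} (hU : IsOpen U)
    (hRU : closure (regionBetween 0 (fun x => ε * K x) s) ⊆ U) (hv : ContDiffOn ℝ 1 v U) :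
    ∫ p in regionBetween (fun x => ε * (K x - δ * H x)) (fun x => ε * K x) s, v p ^ 2 ≤
      δ * (2 * H₁ / K₀) * (∫ p in regionBetween 0 (fun x => ε * K x) s, v p ^ 2) +
        δ * (ε ^ 2 * H₁ * K₁) *
          ∫ p in regionBetween 0 (fun x => ε * K x) s, fderiv ℝ v p (0, 1) ^ 2 := by
  have hbdd : Bornology.IsBounded (regionBetween 0 (fun x => ε * K x) s) :=
    (hsb.prod (Metric.isBounded_Icc 0 (ε * K₁))).subset fun p ⟨hx, h0, h1⟩ =>
      ⟨hx, h0.le, h1.le.trans (mul_le_mul_of_nonneg_left (hKbd _ hx).2 hε.le)⟩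
  refine setIntegral_regionBetween_sq_le (lo := fun x => ε * (K x - δ * H x)) hs measurable_const
    ((hK.sub (hH.const_mul δ)).const_mul ε) (hK.const_mul ε) (fun x hx => ?_)
    (mul_pos hε hK₁) (fun x hx => ?_) (fun x hx => ?_) hbdd hU hRU hv
  all_goals obtain ⟨hK₀K, hKK₁⟩ := hKbd x hx; obtain ⟨hH0, hHH₁⟩ := hHbd x hx
  · have hδH : δ * H x ≤ K x := (mul_le_mul_of_nonneg_left hHH₁ hδ).trans (hsmall.trans hK₀K)
    refine ⟨?_, ?_, ?_⟩
    · exact mul_nonneg hε.le (sub_nonneg.2 hδH)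
    · nlinarith [mul_nonneg hδ hH0]
    · exact mul_pos hε (hK₀.trans_le hK₀K)
  · have hK0 : 0 < K x := hK₀.trans_le hK₀K
    have hH₁ : 0 ≤ H₁ := hH0.trans hHH₁
    calc (ε * K x - ε * (K x - δ * H x)) * (1 / (ε * K x - (0 : ℝ → ℝ) x) + 1 / (ε * K₁))
        = δ * (H x / K x + H x / K₁) := by rw [Pi.zero_apply, sub_zero]; field_simp; ring
      _ ≤ δ * (H₁ / K₀ + H₁ / K₀) := by gcongr; linarith
      _ = δ * (2 * H₁ / K₀) := by ring
  · calc (ε * K x - ε * (K x - δ * H x)) * (ε * K₁) = δ * (ε ^ 2 * H x * K₁) := by ring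
      _ ≤ δ * (ε ^ 2 * H₁ * K₁) := by gcongr

theorem concentrated_integral_estimate_thin_domain_general
    (a b : ℝ) (hab : a < b) (γ ε : ℝ) (hε : ε ∈ Set.Ioo (0 : ℝ) 1)
    (K : ℝ → ℝ) (hKcont : ContinuousOn K (Set.Icc a b))
    (K₀ K₁ : ℝ) (hK₀ : 0 < K₀)
    (hKbd : ∀ x ∈ Set.Icc a b, K₀ ≤ K x ∧ K x ≤ K₁)
    (H : ℝ → ℝ) (hHmeas : Measurable H)
    (H₁ : ℝ) (hHbd : ∀ x ∈ Set.Icc a b, 0 ≤ H x ∧ H x ≤ H₁)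
    (hsmall : ε ^ γ * H₁ ≤ K₀)
    (Ra θ₁ : Set (ℝ × ℝ))
    (hRa : Ra = {p : ℝ × ℝ | p.1 ∈ Set.Icc a b ∧ 0 < p.2 ∧ p.2 < ε * K p.1})
    (hθ₁ : θ₁ = {p : ℝ × ℝ | p.1 ∈ Set.Icc a b ∧
      ε * (K p.1 - ε ^ γ * H p.1) < p.2 ∧ p.2 < ε * K p.1})
    (v : ℝ × ℝ → ℝ) (U : Set (ℝ × ℝ)) (hU : IsOpen U) (hUR : closure Ra ⊆ U)
    (hv : ContDiffOn ℝ 1 v U) :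
    (1 / ε ^ γ) * ∫ p in θ₁, (v p) ^ 2 ≤
      (2 * H₁ / K₀) * (∫ p in Ra, (v p) ^ 2) +
        ε ^ 2 * H₁ * K₁ * ∫ p in Ra, (fderiv ℝ v p (0, 1)) ^ 2 := by
  obtain ⟨hε₀, -⟩ := hε
  have hK₁ : 0 < K₁ := hK₀.trans_le ((hKbd a (left_mem_Icc.2 hab.le)).1.trans
    (hKbd a (left_mem_Icc.2 hab.le)).2)
  -- Fubini needs measurable boundary functions on all of `ℝ`; the regions only see `[a, b]`.
  obtain ⟨K', hK'm, hK'K⟩ : ∃ K' : ℝ → ℝ, Measurable K' ∧ EqOn K' K (Icc a b) :=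
    ⟨(Icc a b).piecewise K 0, hKcont.measurable_piecewise continuousOn_const measurableSet_Icc,
      piecewise_eqOn _ _ _⟩
  have hRa' : Ra = regionBetween 0 (fun x => ε * K' x) (Icc a b) :=
    hRa.trans (regionBetween_congr (f := 0) (g := fun x => ε * K x) (eqOn_refl _ _)
      fun x hx => by simp [hK'K hx])
  have hθ₁' : θ₁ = regionBetween (fun x => ε * (K' x - ε ^ γ * H x)) (fun x => ε * K' x)
      (Icc a b) :=
    hθ₁.trans (regionBetween_congr (f := fun x => ε * (K x - ε ^ γ * H x))
      (g := fun x => ε * K x) (fun x hx => by simp [hK'K hx]) fun x hx => by simp [hK'K hx])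
  have h := setIntegral_thinStrip_sq_le measurableSet_Icc (Metric.isBounded_Icc a b) hε₀
    (Real.rpow_nonneg hε₀.le γ) hK'm hK₀ hK₁ (fun x hx => hK'K hx ▸ hKbd x hx) hHmeas hHbd
    hsmall hU (hRa' ▸ hUR) hv
  rw [← hRa', ← hθ₁'] at h
  rw [one_div, inv_mul_le_iff₀ (Real.rpow_pos_of_pos hε₀ γ)]
  linarith

/-- Concentrated-integral estimate: the rescaled `L²` integral over the narrow oscillating
strip near the top boundary is controlled by the `L²` norms of `v` and its vertical
derivative in the thin domain. -/
theorem concentrated_integral_estimate_thin_domain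
    (a b : ℝ) (hab : a < b) (γ ε : ℝ) (hγ : 0 < γ) (hε : ε ∈ Set.Ioo (0 : ℝ) 1)
    (K : ℝ → ℝ) (hKcont : ContinuousOn K (Set.Icc a b))
    (K₀ K₁ : ℝ) (hK₀ : 0 < K₀)
    (hKbd : ∀ x ∈ Set.Icc a b, K₀ ≤ K x ∧ K x ≤ K₁)
    (H : ℝ → ℝ) (hHmeas : Measurable H)
    (H₁ : ℝ) (hHbd : ∀ x ∈ Set.Icc a b, 0 ≤ H x ∧ H x ≤ H₁)
    (hsmall : ε ^ γ * H₁ ≤ K₀)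
    (Ra θ₁ : Set (ℝ × ℝ))
    (hRa : Ra = {p : ℝ × ℝ | p.1 ∈ Set.Icc a b ∧ 0 < p.2 ∧ p.2 < ε * K p.1})
    (hθ₁ : θ₁ = {p : ℝ × ℝ | p.1 ∈ Set.Icc a b ∧
      ε * (K p.1 - ε ^ γ * H p.1) < p.2 ∧ p.2 < ε * K p.1})
    (v : ℝ × ℝ → ℝ) (U : Set (ℝ × ℝ)) (hU : IsOpen U) (hUR : closure Ra ⊆ U)
    (hv : ContDiffOn ℝ 1 v U) :
    (1 / ε ^ γ) * ∫ p in θ₁, (v p) ^ 2 ≤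
      (2 * H₁ / K₀) * (∫ p in Ra, (v p) ^ 2) +
        ε ^ 2 * H₁ * K₁ * ∫ p in Ra, (fderiv ℝ v p (0, 1)) ^ 2 :=
  concentrated_integral_estimate_thin_domain_general a b hab γ ε hε K hKcont K₀ K₁ hK₀ hKbd H hHmeas
    H₁ hHbd hsmall Ra θ₁ hRa hθ₁ v U hU hUR hv
end

section
/- Let I = [a,b] ⊂ ℝ with a < b, and let K_0, K_1 > 0. For each ε ∈ (0,1) let K_ε : I → ℝ be measurable with K_0 ≤ K_ε(x) ≤ K_1 for almost every x ∈ I, and let φ_ε ∈ L²(I). Suppose there exist σ, P ∈ L²(I) such that, as ε → 0⁺, K_ε φ_ε → σ strongly in L²(I) (i.e. ‖K_ε φ_ε − σ‖_{L²(I)} → 0) and 1/K_ε converges weakly in L²(I) to P. Then 1/K_1 ≤ P ≤ 1/K_0 almost everywhere in I (in particular Pσ ∈ L²(I)), and φ_ε converges weakly in L²(I) to Pσ as ε → 0⁺. -/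
open MeasureTheory Filter Set Topology
open scoped ENNReal

/-!
Testing `1/K_ε ⇀ P` against indicators of measurable sets traps every set integral of `P`
between those of `1/K₁` and `1/K₀`, which gives the pointwise bounds on `P`.

For the weak limit of `φ_ε`, write `φ_ε g = K_ε⁻¹ (K_ε φ_ε - σ) g + K_ε⁻¹ σ g`. The first term is
at most `K₀⁻¹ ‖K_ε φ_ε - σ‖₂ ‖g‖₂ → 0` by Hölder. In the second, `σ g` is only integrable, but
since the `1/K_ε` are uniformly bounded, their weak `L²` convergence extends to integrable test
functions by density of simple functions in `L¹`.
-/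

theorem tendsto_of_forall_approx {ι X : Type*} [PseudoMetricSpace X] {l : Filter ι}
    {u : ι → X} {x : X}
    (h : ∀ δ > 0, ∃ (v : ι → X) (y : X), Tendsto v l (𝓝 y) ∧
      (∀ᶠ i in l, dist (u i) (v i) ≤ δ) ∧ dist y x ≤ δ) :
    Tendsto u l (𝓝 x) := by
  refine Metric.tendsto_nhds.2 fun η hη => ?_
  obtain ⟨v, y, hvy, huv, hyx⟩ := h (η / 3) (by positivity)
  filter_upwards [Metric.tendsto_nhds.1 hvy (η / 3) (by positivity), huv] with i hvi hui
  calc dist (u i) x ≤ dist (u i) (v i) + dist (v i) y + dist y x := dist_triangle4 _ _ _ _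
    _ < η := by linarith

namespace MeasureTheory

variable {α ι : Type*} [MeasurableSpace α] {μ : Measure α} {l : Filter ι}

theorem Integrable.exists_simpleFunc_integral_norm_sub_lt {E : Type*} [NormedAddCommGroup E]
    {h : α → E} (hh : Integrable h μ) {δ : ℝ} (hδ : 0 < δ) :
    ∃ s : SimpleFunc α E, ∫ x, ‖h x - s x‖ ∂μ < δ := by
  obtain ⟨s, hs, hs_int⟩ := (memLp_one_iff_integrable.2 hh).exists_simpleFunc_eLpNorm_sub_lt
    ENNReal.one_ne_top (ENNReal.ofReal_pos.2 hδ).ne'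
  refine ⟨s, ?_⟩
  rw [integral_norm_eq_lintegral_enorm (f := fun x => h x - s x) (hh.1.sub hs_int.1),
    ← eLpNorm_one_eq_lintegral_enorm]
  exact ENNReal.toReal_lt_of_lt_ofReal hs

theorem norm_integral_mul_le {f h : α → ℝ} {C : ℝ} (hf : ∀ᵐ x ∂μ, ‖f x‖ ≤ C)
    (hh : Integrable h μ) :
    ‖∫ x, f x * h x ∂μ‖ ≤ C * ∫ x, ‖h x‖ ∂μ := by
  rw [← integral_const_mul]
  refine norm_integral_le_of_norm_le (hh.norm.const_mul C) ?_
  filter_upwards [hf] with x hx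
  rw [norm_mul]
  exact mul_le_mul_of_nonneg_right hx (norm_nonneg _)

theorem tendsto_integral_mul_zero {f h : ι → α → ℝ} {C : ℝ}
    (hf : ∀ᶠ i in l, ∀ᵐ x ∂μ, ‖f i x‖ ≤ C) (hh : ∀ᶠ i in l, Integrable (h i) μ)
    (hh0 : Tendsto (fun i => ∫ x, ‖h i x‖ ∂μ) l (𝓝 0)) :
    Tendsto (fun i => ∫ x, f i x * h i x ∂μ) l (𝓝 0) := by
  refine squeeze_zero_norm' ?_ (by simpa using hh0.const_mul C)
  filter_upwards [hf, hh] with i hfi hhi using norm_integral_mul_le hfi hhi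

theorem tendsto_integral_norm_mul_zero {p q : ℝ≥0∞} [p.HolderConjugate q] {u : ι → α → ℝ}
    {g : α → ℝ} (hu : ∀ᶠ i in l, MemLp (u i) p μ)
    (hu0 : Tendsto (fun i => eLpNorm (u i) p μ) l (𝓝 0)) (hg : MemLp g q μ) :
    Tendsto (fun i => ∫ x, ‖u i x * g x‖ ∂μ) l (𝓝 0) := by
  have hholder : ∀ᶠ i in l,
      ∫ x, ‖u i x * g x‖ ∂μ ≤ (eLpNorm (u i) p μ).toReal * (eLpNorm g q μ).toReal := by
    filter_upwards [hu] with i hui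
    rw [integral_norm_eq_lintegral_enorm (f := fun x => u i x * g x) (hui.1.mul hg.1),
      ← eLpNorm_one_eq_lintegral_enorm, ← ENNReal.toReal_mul]
    refine ENNReal.toReal_mono (ENNReal.mul_ne_top hui.eLpNorm_ne_top hg.eLpNorm_ne_top) ?_
    rw [← Pi.mul_def, ← smul_eq_mul]
    exact eLpNorm_smul_le_mul_eLpNorm (r := 1) hg.1 hui.1
  have hlim :
      Tendsto (fun i => (eLpNorm (u i) p μ).toReal * (eLpNorm g q μ).toReal) l (𝓝 0) := by
    simpa using ((ENNReal.tendsto_toReal ENNReal.zero_ne_top).comp hu0).mul_const _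
  exact squeeze_zero' (Eventually.of_forall fun _ => integral_nonneg fun _ => norm_nonneg _)
    hholder hlim

variable [IsFiniteMeasure μ]

theorem tendsto_setIntegral_of_weak_tendsto {f : ι → α → ℝ} {F : α → ℝ}
    (hweak : ∀ g : α → ℝ, MemLp g 2 μ →
      Tendsto (fun i => ∫ x, f i x * g x ∂μ) l (𝓝 (∫ x, F x * g x ∂μ)))
    {s : Set α} (hs : MeasurableSet s) :
    Tendsto (fun i => ∫ x in s, f i x ∂μ) l (𝓝 (∫ x in s, F x ∂μ)) := by
  have h := hweak _ ((memLp_const (1 : ℝ)).indicator hs)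
  simpa only [← indicator_mul_right, mul_one, integral_indicator hs] using h

theorem ae_mem_Icc_of_weak_tendsto [l.NeBot] {f : ι → α → ℝ} {F : α → ℝ} {c d : ℝ}
    (hf : ∀ᶠ i in l, AEStronglyMeasurable (f i) μ)
    (hfcd : ∀ᶠ i in l, ∀ᵐ x ∂μ, f i x ∈ Icc c d) (hF : Integrable F μ)
    (hweak : ∀ g : α → ℝ, MemLp g 2 μ →
      Tendsto (fun i => ∫ x, f i x * g x ∂μ) l (𝓝 (∫ x, F x * g x ∂μ))) :
    ∀ᵐ x ∂μ, F x ∈ Icc c d := by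
  have hint : ∀ᶠ i in l, Integrable (f i) μ := by
    filter_upwards [hf, hfcd] with i hfi hfcdi
    exact Integrable.of_bound hfi (max |c| |d|)
      (hfcdi.mono fun x hx => abs_le_max_abs_abs hx.1 hx.2)
  have hc : (fun _ => c) ≤ᵐ[μ] F :=
    ae_le_of_forall_setIntegral_le (integrable_const c) hF fun s hs _ =>
      ge_of_tendsto (tendsto_setIntegral_of_weak_tendsto hweak hs) <| by
        filter_upwards [hint, hfcd] with i hi hcd
        exact setIntegral_mono_ae (integrable_const c).integrableOn hi.integrableOn
          (hcd.mono fun x hx => hx.1)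
  have hd : F ≤ᵐ[μ] fun _ => d :=
    ae_le_of_forall_setIntegral_le hF (integrable_const d) fun s hs _ =>
      le_of_tendsto (tendsto_setIntegral_of_weak_tendsto hweak hs) <| by
        filter_upwards [hint, hfcd] with i hi hcd
        exact setIntegral_mono_ae hi.integrableOn (integrable_const d).integrableOn
          (hcd.mono fun x hx => hx.2)
  filter_upwards [hc, hd] with x hcx hdx using ⟨hcx, hdx⟩

theorem tendsto_integral_mul_integrable_of_weak_tendsto {f : ι → α → ℝ} {F : α → ℝ} {C : ℝ}
    (hf : ∀ᶠ i in l, AEStronglyMeasurable (f i) μ ∧ ∀ᵐ x ∂μ, ‖f i x‖ ≤ C)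
    (hF : AEStronglyMeasurable F μ) (hFC : ∀ᵐ x ∂μ, ‖F x‖ ≤ C)
    (hweak : ∀ g : α → ℝ, MemLp g 2 μ →
      Tendsto (fun i => ∫ x, f i x * g x ∂μ) l (𝓝 (∫ x, F x * g x ∂μ)))
    {h : α → ℝ} (hh : Integrable h μ) :
    Tendsto (fun i => ∫ x, f i x * h x ∂μ) l (𝓝 (∫ x, F x * h x ∂μ)) := by
  refine tendsto_of_forall_approx fun δ hδ => ?_
  obtain ⟨s, hs⟩ := hh.exists_simpleFunc_integral_norm_sub_lt
    (show 0 < δ / (|C| + 1) by positivity)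
  have hs_int : Integrable s μ := s.integrable_of_isFiniteMeasure
  have hclose : ∀ k : α → ℝ, AEStronglyMeasurable k μ → (∀ᵐ x ∂μ, ‖k x‖ ≤ C) →
      dist (∫ x, k x * h x ∂μ) (∫ x, k x * s x ∂μ) ≤ δ := by
    intro k hk hkC
    rw [dist_eq_norm, ← integral_sub (hh.bdd_mul hk hkC) (hs_int.bdd_mul hk hkC)]
    simp only [← mul_sub]
    calc _ ≤ C * ∫ x, ‖h x - s x‖ ∂μ := norm_integral_mul_le hkC (hh.sub hs_int)
      _ ≤ |C| * (δ / (|C| + 1)) := by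
          gcongr
          · exact le_abs_self C
      _ ≤ δ := by
          rw [mul_div_assoc', div_le_iff₀ (by positivity)]
          nlinarith [abs_nonneg C]
  refine ⟨fun i => ∫ x, f i x * s x ∂μ, ∫ x, F x * s x ∂μ,
    hweak _ (s.memLp_of_isFiniteMeasure 2 μ), ?_, ?_⟩
  · filter_upwards [hf] with i hi using hclose _ hi.1 hi.2
  · rw [dist_comm]
    exact hclose _ hF hFC

theorem tendsto_integral_mul_of_weak_of_strong {f v : ι → α → ℝ} {F σ g : α → ℝ} {C : ℝ}
    (hf : ∀ᶠ i in l, AEStronglyMeasurable (f i) μ ∧ ∀ᵐ x ∂μ, ‖f i x‖ ≤ C)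
    (hF : AEStronglyMeasurable F μ) (hFC : ∀ᵐ x ∂μ, ‖F x‖ ≤ C)
    (hweak : ∀ g : α → ℝ, MemLp g 2 μ →
      Tendsto (fun i => ∫ x, f i x * g x ∂μ) l (𝓝 (∫ x, F x * g x ∂μ)))
    (hv : ∀ᶠ i in l, AEStronglyMeasurable (v i) μ) (hσ : MemLp σ 2 μ)
    (hvσ : Tendsto (fun i => eLpNorm (fun x => v i x - σ x) 2 μ) l (𝓝 0))
    (hg : MemLp g 2 μ) :
    Tendsto (fun i => ∫ x, f i x * (v i x * g x) ∂μ) l (𝓝 (∫ x, F x * (σ x * g x) ∂μ)) := by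
  have hdiff : ∀ᶠ i in l, MemLp (fun x => v i x - σ x) 2 μ := by
    filter_upwards [hv, hvσ.eventually_lt_const ENNReal.zero_lt_top] with i hvi hfin
    exact ⟨hvi.sub hσ.1, hfin⟩
  have hsplit : ∀ᶠ i in l, ∫ x, f i x * (v i x * g x) ∂μ =
      ∫ x, f i x * ((v i x - σ x) * g x) ∂μ + ∫ x, f i x * (σ x * g x) ∂μ := by
    filter_upwards [hf, hdiff] with i hfi hdiff_i
    have hdiff_int : Integrable (fun x => f i x * ((v i x - σ x) * g x)) μ :=
      (hdiff_i.integrable_mul hg).bdd_mul hfi.1 hfi.2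
    have hσ_int : Integrable (fun x => f i x * (σ x * g x)) μ :=
      (hσ.integrable_mul hg).bdd_mul hfi.1 hfi.2
    rw [← integral_add hdiff_int hσ_int]
    congr 1 with x
    ring
  have hdiff_lim : Tendsto (fun i => ∫ x, f i x * ((v i x - σ x) * g x) ∂μ) l (𝓝 0) :=
    tendsto_integral_mul_zero (hf.mono fun _ hfi => hfi.2)
      (by filter_upwards [hdiff] with i hdiff_i using hdiff_i.integrable_mul hg)
      (tendsto_integral_norm_mul_zero hdiff hvσ hg)
  have hσ_lim :=
    tendsto_integral_mul_integrable_of_weak_tendsto hf hF hFC hweak (hσ.integrable_mul hg)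
  simpa only [zero_add, Pi.mul_apply] using
    (hdiff_lim.add hσ_lim).congr' (hsplit.mono fun _ h => h.symm)

end MeasureTheory

theorem weak_limit_of_flux_quotient_general
    (a b : ℝ) (K₀ K₁ : ℝ) (hK₀ : 0 < K₀) (hK₁ : 0 < K₁)
    (K φ : ℝ → ℝ → ℝ)
    (hKmeas : ∀ ε ∈ Set.Ioo (0 : ℝ) 1, Measurable (K ε))
    (hKbd : ∀ ε ∈ Set.Ioo (0 : ℝ) 1,
      ∀ᵐ x ∂(volume.restrict (Set.Icc a b)), K₀ ≤ K ε x ∧ K ε x ≤ K₁)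
    (hφ : ∀ ε ∈ Set.Ioo (0 : ℝ) 1, MemLp (φ ε) 2 (volume.restrict (Set.Icc a b)))
    (σ P : ℝ → ℝ)
    (hσ : MemLp σ 2 (volume.restrict (Set.Icc a b)))
    (hP : MemLp P 2 (volume.restrict (Set.Icc a b)))
    (hstrong : Tendsto
      (fun ε : ℝ => eLpNorm (fun x => K ε x * φ ε x - σ x) 2
        (volume.restrict (Set.Icc a b)))
      (nhdsWithin 0 (Set.Ioi 0)) (nhds 0))
    (hweak : ∀ g : ℝ → ℝ, MemLp g 2 (volume.restrict (Set.Icc a b)) →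
      Tendsto (fun ε : ℝ => ∫ x in Set.Icc a b, (K ε x)⁻¹ * g x)
        (nhdsWithin 0 (Set.Ioi 0))
        (nhds (∫ x in Set.Icc a b, P x * g x))) :
    (∀ᵐ x ∂(volume.restrict (Set.Icc a b)), 1 / K₁ ≤ P x ∧ P x ≤ 1 / K₀) ∧
    MemLp (fun x => P x * σ x) 2 (volume.restrict (Set.Icc a b)) ∧
    ∀ g : ℝ → ℝ, MemLp g 2 (volume.restrict (Set.Icc a b)) →
      Tendsto (fun ε : ℝ => ∫ x in Set.Icc a b, φ ε x * g x)
        (nhdsWithin 0 (Set.Ioi 0))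
        (nhds (∫ x in Set.Icc a b, P x * σ x * g x)) := by
  set μ := volume.restrict (Icc a b)
  have : IsFiniteMeasure μ := isFiniteMeasure_restrict.2 measure_Icc_lt_top.ne
  have hε : ∀ᶠ ε in 𝓝[>] (0 : ℝ), ε ∈ Ioo (0 : ℝ) 1 := Ioo_mem_nhdsGT one_pos
  have hKinv_meas : ∀ᶠ ε in 𝓝[>] (0 : ℝ), AEStronglyMeasurable (fun x => (K ε x)⁻¹) μ := by
    filter_upwards [hε] with ε hε using (hKmeas ε hε).inv.aestronglyMeasurable
  have hKinv_mem : ∀ᶠ ε in 𝓝[>] (0 : ℝ), ∀ᵐ x ∂μ, (K ε x)⁻¹ ∈ Icc K₁⁻¹ K₀⁻¹ := by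
    filter_upwards [hε] with ε hε
    filter_upwards [hKbd ε hε] with x hx
    exact ⟨inv_anti₀ (hK₀.trans_le hx.1) hx.2, inv_anti₀ hK₀ hx.1⟩
  have hP_mem : ∀ᵐ x ∂μ, P x ∈ Icc K₁⁻¹ K₀⁻¹ :=
    ae_mem_Icc_of_weak_tendsto hKinv_meas hKinv_mem (hP.integrable one_le_two) hweak
  have norm_le_of_mem {t : ℝ} (ht : t ∈ Icc K₁⁻¹ K₀⁻¹) : ‖t‖ ≤ K₀⁻¹ := by
    rw [Real.norm_of_nonneg ((inv_pos.2 hK₁).le.trans ht.1)]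
    exact ht.2
  have hKinv_bdd : ∀ᶠ ε in 𝓝[>] (0 : ℝ), ∀ᵐ x ∂μ, ‖(K ε x)⁻¹‖ ≤ K₀⁻¹ := by
    filter_upwards [hKinv_mem] with ε hε using hε.mono fun x => norm_le_of_mem
  have hP_bdd : ∀ᵐ x ∂μ, ‖P x‖ ≤ K₀⁻¹ := hP_mem.mono fun x => norm_le_of_mem
  refine ⟨by simpa only [one_div, mem_Icc] using hP_mem,
    hσ.mul (memLp_top_of_bound hP.1 _ hP_bdd), fun g hg => ?_⟩
  have hKφ : ∀ᶠ ε in 𝓝[>] (0 : ℝ), AEStronglyMeasurable (fun x => K ε x * φ ε x) μ := by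
    filter_upwards [hε] with ε hε using (hKmeas ε hε).aestronglyMeasurable.mul (hφ ε hε).1
  have hcancel : ∀ᶠ ε in 𝓝[>] (0 : ℝ),
      ∫ x, (K ε x)⁻¹ * (K ε x * φ ε x * g x) ∂μ = ∫ x, φ ε x * g x ∂μ := by
    filter_upwards [hε] with ε hε
    refine integral_congr_ae ?_
    filter_upwards [hKbd ε hε] with x hx
    field_simp [(hK₀.trans_le hx.1).ne']
  simpa only [mul_assoc] using (tendsto_integral_mul_of_weak_of_strong
    (hKinv_meas.and hKinv_bdd) hP.1 hP_bdd hweak hKφ hσ hstrong hg).congr' hcancel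

/-- If `K_ε φ_ε → σ` strongly in `L²(I)` and `1/K_ε ⇀ P` weakly in `L²(I)`, with
`K₀ ≤ K_ε ≤ K₁`, then `1/K₁ ≤ P ≤ 1/K₀` a.e. and `φ_ε ⇀ P σ` weakly in `L²(I)`. -/
theorem weak_limit_of_flux_quotient
    (a b : ℝ) (hab : a < b) (K₀ K₁ : ℝ) (hK₀ : 0 < K₀) (hK₁ : 0 < K₁)
    (K φ : ℝ → ℝ → ℝ)
    (hKmeas : ∀ ε ∈ Set.Ioo (0 : ℝ) 1, Measurable (K ε))
    (hKbd : ∀ ε ∈ Set.Ioo (0 : ℝ) 1,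
      ∀ᵐ x ∂(volume.restrict (Set.Icc a b)), K₀ ≤ K ε x ∧ K ε x ≤ K₁)
    (hφ : ∀ ε ∈ Set.Ioo (0 : ℝ) 1, MemLp (φ ε) 2 (volume.restrict (Set.Icc a b)))
    (σ P : ℝ → ℝ)
    (hσ : MemLp σ 2 (volume.restrict (Set.Icc a b)))
    (hP : MemLp P 2 (volume.restrict (Set.Icc a b)))
    (hstrong : Tendsto
      (fun ε : ℝ => eLpNorm (fun x => K ε x * φ ε x - σ x) 2
        (volume.restrict (Set.Icc a b)))
      (nhdsWithin 0 (Set.Ioi 0)) (nhds 0))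
    (hweak : ∀ g : ℝ → ℝ, MemLp g 2 (volume.restrict (Set.Icc a b)) →
      Tendsto (fun ε : ℝ => ∫ x in Set.Icc a b, (K ε x)⁻¹ * g x)
        (nhdsWithin 0 (Set.Ioi 0))
        (nhds (∫ x in Set.Icc a b, P x * g x))) :
    (∀ᵐ x ∂(volume.restrict (Set.Icc a b)), 1 / K₁ ≤ P x ∧ P x ≤ 1 / K₀) ∧
    MemLp (fun x => P x * σ x) 2 (volume.restrict (Set.Icc a b)) ∧
    ∀ g : ℝ → ℝ, MemLp g 2 (volume.restrict (Set.Icc a b)) →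
      Tendsto (fun ε : ℝ => ∫ x in Set.Icc a b, φ ε x * g x)
        (nhdsWithin 0 (Set.Ioi 0))
        (nhds (∫ x in Set.Icc a b, P x * σ x * g x)) :=
  weak_limit_of_flux_quotient_general a b K₀ K₁ hK₀ hK₁ K φ hKmeas hKbd hφ σ P hσ hP hstrong hweak
end
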